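/- arXiv:1507.00832 — 5 statements merged into one kernel-verified Lean document; each statement's English description precedes it below -/
import Mathlib

section
/- Let Ω ⊂ ℝ be a compact interval, K : Ω×Ω → (0,∞) a continuous symmetric kernel with ∫_Ω K(μ,x) dx = 1 for every μ ∈ Ω, and g₀ : Ω → (0,∞) a continuous probability density; set f₀(x) = ∫_Ω K(μ,x) g₀(μ) dμ and P_{g₀}(μ₁,μ₂) = ∫_Ω √(g₀(μ₁)) K(μ₁,x) f₀(x)^{-1} K(x,μ₂) √(g₀(μ₂)) dx. Then for every square-integrable h : Ω → ℝ, 0 ≤ ∫_Ω ∫_Ω h(μ₁) P_{g₀}(μ₁,μ₂) h(μ₂) dμ₁ dμ₂ ≤ ∫_Ω h(μ)² dμ; in particular all eigenvalues of the integral operator with kernel P_{g₀} lie in [0,1]. -/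
open MeasureTheory

/-! With `k(μ,x) = √g₀(μ) K(μ,x)` and `T(x) = ∫ h(μ) k(μ,x) dμ`, Fubini turns the quadratic form
into `∫ f₀(x)⁻¹ T(x)² dx`, which is nonnegative. Cauchy–Schwarz with weight `K(·,x)` gives
`T(x)² ≤ f₀(x) ∫ h(μ)² K(μ,x) dμ`, and integrating in `x` with `∫ K(μ,x) dx = 1` yields `∫ h²`.
On a compact interval `K`, `g₀` and `1/f₀` are bounded, which justifies every exchange of
integrals. -/

section EssentiallyBoundedKernel

variable {α β : Type*} [MeasurableSpace α] [MeasurableSpace β] {ν : Measure α} {ν' : Measure β}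
  [IsFiniteMeasure ν] [IsFiniteMeasure ν'] {k : α → β → ℝ} {C : ℝ} {φ : α → ℝ}

theorem ae_ae_swap_of_ae_prod {p : α → β → Prop} (h : ∀ᵐ z ∂ν.prod ν', p z.1 z.2) :
    ∀ᵐ y ∂ν', ∀ᵐ x ∂ν, p x y :=
  Measure.ae_ae_of_ae_prod (Measure.measurePreserving_swap.quasiMeasurePreserving.ae h)

theorem ae_norm_integral_mul_kernel_le (hkC : ∀ᵐ p ∂ν.prod ν', ‖k p.1 p.2‖ ≤ C)
    (hφ : Integrable φ ν) : ∀ᵐ x ∂ν', ‖∫ μ, φ μ * k μ x ∂ν‖ ≤ (∫ μ, ‖φ μ‖ ∂ν) * C := by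
  filter_upwards [ae_ae_swap_of_ae_prod (p := fun μ x => ‖k μ x‖ ≤ C) hkC] with x hx
  rw [← integral_mul_const]
  refine norm_integral_le_of_norm_le (hφ.norm.mul_const C) ?_
  filter_upwards [hx] with μ hμ
  rw [norm_mul]
  exact mul_le_mul_of_nonneg_left hμ (norm_nonneg _)

theorem aestronglyMeasurable_integral_mul_kernel
    (hk : AEStronglyMeasurable (fun p : α × β => k p.1 p.2) (ν.prod ν'))
    (hφ : AEStronglyMeasurable φ ν) : AEStronglyMeasurable (fun x => ∫ μ, φ μ * k μ x ∂ν) ν' :=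
  (hφ.comp_snd.mul hk.prod_swap).integral_prod_right'

theorem integrable_integral_mul_kernel
    (hk : AEStronglyMeasurable (fun p : α × β => k p.1 p.2) (ν.prod ν'))
    (hkC : ∀ᵐ p ∂ν.prod ν', ‖k p.1 p.2‖ ≤ C) (hφ : Integrable φ ν) :
    Integrable (fun x => ∫ μ, φ μ * k μ x ∂ν) ν' :=
  .of_bound (aestronglyMeasurable_integral_mul_kernel hk hφ.1) _
    (ae_norm_integral_mul_kernel_le hkC hφ)

theorem integral_mul_integral_kernel_comm
    (hk : AEStronglyMeasurable (fun p : α × β => k p.1 p.2) (ν.prod ν'))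
    (hkC : ∀ᵐ p ∂ν.prod ν', ‖k p.1 p.2‖ ≤ C) (hφ : Integrable φ ν) {ψ : β → ℝ} {D : ℝ}
    (hψ : AEStronglyMeasurable ψ ν') (hψD : ∀ᵐ x ∂ν', ‖ψ x‖ ≤ D) :
    ∫ μ, φ μ * ∫ x, k μ x * ψ x ∂ν' ∂ν = ∫ x, (∫ μ, φ μ * k μ x ∂ν) * ψ x ∂ν' := by
  have hψD' : ∀ᵐ p ∂ν.prod ν', ‖ψ p.2‖ ≤ D := Measure.quasiMeasurePreserving_snd.ae hψD
  have hint : Integrable (Function.uncurry fun μ x => φ μ * (k μ x * ψ x)) (ν.prod ν') := by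
    refine (hφ.comp_fst ν').mul_bdd (hk.mul hψ.comp_snd) (c := C * D) ?_
    filter_upwards [hkC, hψD'] with p hkp hψp
    rw [norm_mul]
    exact mul_le_mul hkp hψp (norm_nonneg _) ((norm_nonneg _).trans hkp)
  simp_rw [← integral_const_mul, ← integral_mul_const, mul_assoc]
  exact integral_integral_swap hint

theorem integral_integral_mul_gram_kernel_mul
    (hk : AEStronglyMeasurable (fun p : α × β => k p.1 p.2) (ν.prod ν'))
    (hkC : ∀ᵐ p ∂ν.prod ν', ‖k p.1 p.2‖ ≤ C) {w : β → ℝ} {D : ℝ}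
    (hw : AEStronglyMeasurable w ν') (hwD : ∀ᵐ x ∂ν', ‖w x‖ ≤ D) {h : α → ℝ} (hh : Integrable h ν) :
    ∫ μ₁, ∫ μ₂, h μ₁ * (∫ x, k μ₁ x * w x * k μ₂ x ∂ν') * h μ₂ ∂ν ∂ν
      = ∫ x, w x * (∫ μ, h μ * k μ x ∂ν) ^ 2 ∂ν' := by
  set T := fun x => ∫ μ, h μ * k μ x ∂ν
  have hT : AEStronglyMeasurable T ν' := aestronglyMeasurable_integral_mul_kernel hk hh.1
  have hTC := ae_norm_integral_mul_kernel_le hkC hh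
  have hinner : ∀ᵐ μ₁ ∂ν, ∫ μ₂, h μ₁ * (∫ x, k μ₁ x * w x * k μ₂ x ∂ν') * h μ₂ ∂ν
      = h μ₁ * ∫ x, k μ₁ x * (w x * T x) ∂ν' := by
    filter_upwards [hk.prodMk_left, Measure.ae_ae_of_ae_prod hkC] with μ₁ hk₁ hkC₁
    calc _ = h μ₁ * ∫ μ₂, h μ₂ * ∫ x, k μ₂ x * (k μ₁ x * w x) ∂ν' ∂ν := by
          rw [← integral_const_mul]
          refine integral_congr_ae (.of_forall fun μ₂ => ?_)
          simp only [← integral_const_mul, ← integral_mul_const]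
          refine integral_congr_ae (.of_forall fun x => ?_)
          ring
      _ = h μ₁ * ∫ x, T x * (k μ₁ x * w x) ∂ν' := by
          rw [integral_mul_integral_kernel_comm hk hkC hh (ψ := fun x => k μ₁ x * w x)
            (hk₁.mul hw) (D := C * D)]
          filter_upwards [hkC₁, hwD] with x hkx hwx
          rw [norm_mul]
          exact mul_le_mul hkx hwx (norm_nonneg _) ((norm_nonneg _).trans hkx)
      _ = _ := by
          refine congrArg _ (integral_congr_ae (.of_forall fun x => ?_))
          ring
  rw [integral_congr_ae hinner, integral_mul_integral_kernel_comm hk hkC hh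
    (ψ := fun x => w x * T x) (hw.mul hT)
    (D := D * ((∫ μ, ‖h μ‖ ∂ν) * C))]
  · refine integral_congr_ae (.of_forall fun x => ?_)
    ring
  · filter_upwards [hwD, hTC] with x hwx hTx
    rw [norm_mul]
    exact mul_le_mul hwx hTx (norm_nonneg _) ((norm_nonneg _).trans hwx)

end EssentiallyBoundedKernel

section CauchySchwarz

variable {α : Type*} [MeasurableSpace α] {ν : Measure α} {u v ρ : α → ℝ}

theorem sq_integral_mul_mul_le (hρ : 0 ≤ᵐ[ν] ρ) (huu : Integrable (fun x => u x ^ 2 * ρ x) ν)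
    (huv : Integrable (fun x => u x * v x * ρ x) ν) (hvv : Integrable (fun x => v x ^ 2 * ρ x) ν) :
    (∫ x, u x * v x * ρ x ∂ν) ^ 2 ≤ (∫ x, u x ^ 2 * ρ x ∂ν) * ∫ x, v x ^ 2 * ρ x ∂ν := by
  have hquad : ∀ t : ℝ, 0 ≤ (∫ x, u x ^ 2 * ρ x ∂ν) * (t * t)
      + 2 * (∫ x, u x * v x * ρ x ∂ν) * t + ∫ x, v x ^ 2 * ρ x ∂ν := fun t =>
    calc 0 ≤ ∫ x, (t * u x + v x) ^ 2 * ρ x ∂ν :=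
          integral_nonneg_of_ae (hρ.mono fun x hx => mul_nonneg (sq_nonneg _) hx)
      _ = ∫ x, (t * t * (u x ^ 2 * ρ x) + 2 * t * (u x * v x * ρ x) + v x ^ 2 * ρ x) ∂ν := by
          congr 1 with x
          ring
      _ = _ := by
          have huu' := huu.const_mul (t * t)
          have huv' := huv.const_mul (2 * t)
          have hsum : Integrable
              (fun x => t * t * (u x ^ 2 * ρ x) + 2 * t * (u x * v x * ρ x)) ν :=
            huu'.add huv'
          rw [integral_add hsum hvv, integral_add huu' huv', integral_const_mul,
            integral_const_mul]
          ring
  have := discrim_le_zero hquad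
  rw [discrim] at this
  linarith

theorem inv_integral_sq_mul_mul_sq_integral_le [IsFiniteMeasure ν] {h : α → ℝ} {C D : ℝ}
    (hh : MemLp h 2 ν) (hρ : AEStronglyMeasurable ρ ν) (hρ0 : 0 ≤ᵐ[ν] ρ)
    (hρC : ∀ᵐ x ∂ν, ‖ρ x‖ ≤ C) (hv : AEStronglyMeasurable v ν) (hvD : ∀ᵐ x ∂ν, ‖v x‖ ≤ D) :
    (∫ x, v x ^ 2 * ρ x ∂ν)⁻¹ * (∫ x, h x * v x * ρ x ∂ν) ^ 2 ≤ ∫ x, h x ^ 2 * ρ x ∂ν := by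
  have hvρC : ∀ᵐ x ∂ν, ‖v x * ρ x‖ ≤ D * C := by
    filter_upwards [hvD, hρC] with x hvx hρx
    rw [norm_mul]
    exact mul_le_mul hvx hρx (norm_nonneg _) ((norm_nonneg _).trans hvx)
  have huu : Integrable (fun x => h x ^ 2 * ρ x) ν := hh.integrable_sq.mul_bdd hρ hρC
  have huv : Integrable (fun x => h x * v x * ρ x) ν := by
    simpa only [Pi.mul_apply, mul_assoc] using (hh.integrable one_le_two).mul_bdd (hv.mul hρ) hvρC
  have hvv : Integrable (fun x => v x ^ 2 * ρ x) ν := by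
    refine .of_bound ((hv.pow 2).mul hρ) (D ^ 2 * C) ?_
    filter_upwards [hvD, hρC] with x hvx hρx
    rw [norm_mul, norm_pow]
    exact mul_le_mul (pow_le_pow_left₀ (norm_nonneg _) hvx 2) hρx (norm_nonneg _) (sq_nonneg _)
  have hA : 0 ≤ ∫ x, h x ^ 2 * ρ x ∂ν :=
    integral_nonneg_of_ae (hρ0.mono fun x hx => mul_nonneg (sq_nonneg _) hx)
  rcases (integral_nonneg_of_ae (hρ0.mono fun x hx => mul_nonneg (sq_nonneg (v x)) hx)).eq_or_lt
    with hV | hV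
  · rwa [← hV, inv_zero, zero_mul]
  · rw [inv_mul_le_iff₀ hV, mul_comm]
    exact sq_integral_mul_mul_le hρ0 huu huv hvv

end CauchySchwarz

section Deconvolution

variable {α β : Type*} [MeasurableSpace α] [MeasurableSpace β]

noncomputable def mixtureDensity (ν : Measure α) (K : α → β → ℝ) (g : α → ℝ) (x : β) : ℝ :=
  ∫ μ, g μ * K μ x ∂ν

/-- The paper writes `K(x, μ₂)` for the second kernel factor; the two agree for symmetric `K`. -/
noncomputable def deconvolutionKernel (ν : Measure α) (ν' : Measure β) (K : α → β → ℝ)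
    (g : α → ℝ) (μ₁ μ₂ : α) : ℝ :=
  ∫ x, √(g μ₁) * K μ₁ x * (mixtureDensity ν K g x)⁻¹ * K μ₂ x * √(g μ₂) ∂ν'

variable {ν : Measure α} {ν' : Measure β} [IsFiniteMeasure ν] [IsFiniteMeasure ν']
  {K : α → β → ℝ} {g : α → ℝ} {c C D : ℝ}

theorem ae_le_mixtureDensity (hK : AEStronglyMeasurable (fun p : α × β => K p.1 p.2) (ν.prod ν'))
    (hKc : ∀ᵐ p ∂ν.prod ν', c ≤ K p.1 p.2) (hKC : ∀ᵐ p ∂ν.prod ν', ‖K p.1 p.2‖ ≤ C)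
    (hg0 : 0 ≤ᵐ[ν] g) (hg1 : ∫ μ, g μ ∂ν = 1) : ∀ᵐ x ∂ν', c ≤ mixtureDensity ν K g x := by
  have hg : Integrable g ν := .of_integral_ne_zero (by simp [hg1])
  filter_upwards [hK.prodMk_right, ae_ae_swap_of_ae_prod (p := fun μ x => c ≤ K μ x) hKc,
    ae_ae_swap_of_ae_prod (p := fun μ x => ‖K μ x‖ ≤ C) hKC] with x hKx hKcx hKCx
  calc c = ∫ μ, g μ * c ∂ν := by rw [integral_mul_const, hg1, one_mul]
    _ ≤ ∫ μ, g μ * K μ x ∂ν := by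
        refine integral_mono_ae (hg.mul_const c) (hg.mul_bdd hKx hKCx) ?_
        filter_upwards [hg0, hKcx] with μ hgμ hKμ
        exact mul_le_mul_of_nonneg_left hKμ hgμ

theorem integral_integral_mul_deconvolutionKernel_mul
    (hK : AEStronglyMeasurable (fun p : α × β => K p.1 p.2) (ν.prod ν'))
    (hKC : ∀ᵐ p ∂ν.prod ν', ‖K p.1 p.2‖ ≤ C) (hg : AEStronglyMeasurable g ν)
    (hgD : ∀ᵐ μ ∂ν, ‖g μ‖ ≤ D) (hc : 0 < c) (hfc : ∀ᵐ x ∂ν', c ≤ mixtureDensity ν K g x)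
    {h : α → ℝ} (hh : Integrable h ν) :
    ∫ μ₁, ∫ μ₂, h μ₁ * deconvolutionKernel ν ν' K g μ₁ μ₂ * h μ₂ ∂ν ∂ν
      = ∫ x, (mixtureDensity ν K g x)⁻¹ * (∫ μ, h μ * (√(g μ) * K μ x) ∂ν) ^ 2 ∂ν' := by
  have hk : AEStronglyMeasurable (fun p : α × β => √(g p.1) * K p.1 p.2) (ν.prod ν') :=
    (Real.continuous_sqrt.comp_aestronglyMeasurable hg).comp_fst.mul hK
  have hkC : ∀ᵐ p ∂ν.prod ν', ‖√(g p.1) * K p.1 p.2‖ ≤ √D * C := by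
    filter_upwards [Measure.quasiMeasurePreserving_fst.ae hgD, hKC] with p hgp hKp
    rw [norm_mul, Real.norm_of_nonneg (Real.sqrt_nonneg _)]
    exact mul_le_mul (Real.sqrt_le_sqrt ((le_abs_self _).trans hgp)) hKp (norm_nonneg _)
      (Real.sqrt_nonneg _)
  have hw : AEStronglyMeasurable (fun x => (mixtureDensity ν K g x)⁻¹) ν' :=
    (aestronglyMeasurable_integral_mul_kernel hK hg).aemeasurable.inv.aestronglyMeasurable
  have hwc : ∀ᵐ x ∂ν', ‖(mixtureDensity ν K g x)⁻¹‖ ≤ c⁻¹ := by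
    filter_upwards [hfc] with x hx
    rw [norm_inv, Real.norm_of_nonneg (hc.le.trans hx)]
    exact inv_anti₀ hc hx
  rw [← integral_integral_mul_gram_kernel_mul hk hkC hw hwc hh]
  refine integral_congr_ae (.of_forall fun μ₁ => integral_congr_ae (.of_forall fun μ₂ => ?_))
  simp only [deconvolutionKernel]
  congr 2
  refine integral_congr_ae (.of_forall fun x => ?_)
  ring

theorem ae_inv_mixtureDensity_mul_sq_le
    (hK : AEStronglyMeasurable (fun p : α × β => K p.1 p.2) (ν.prod ν'))
    (hK0 : ∀ᵐ p ∂ν.prod ν', 0 ≤ K p.1 p.2) (hKC : ∀ᵐ p ∂ν.prod ν', ‖K p.1 p.2‖ ≤ C)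
    (hg : AEStronglyMeasurable g ν) (hg0 : 0 ≤ᵐ[ν] g) (hgD : ∀ᵐ μ ∂ν, ‖g μ‖ ≤ D)
    {h : α → ℝ} (hh : MemLp h 2 ν) :
    ∀ᵐ x ∂ν', (mixtureDensity ν K g x)⁻¹ * (∫ μ, h μ * (√(g μ) * K μ x) ∂ν) ^ 2
      ≤ ∫ μ, h μ ^ 2 * K μ x ∂ν := by
  filter_upwards [hK.prodMk_right, ae_ae_swap_of_ae_prod (p := fun μ x => 0 ≤ K μ x) hK0,
    ae_ae_swap_of_ae_prod (p := fun μ x => ‖K μ x‖ ≤ C) hKC] with x hKx hK0x hKCx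
  have hf : mixtureDensity ν K g x = ∫ μ, √(g μ) ^ 2 * K μ x ∂ν :=
    integral_congr_ae (hg0.mono fun μ hμ => by simp only [Real.sq_sqrt hμ])
  simp only [hf, ← mul_assoc]
  refine inv_integral_sq_mul_mul_sq_integral_le hh hKx hK0x hKCx
    (Real.continuous_sqrt.comp_aestronglyMeasurable hg) (D := √D) ?_
  filter_upwards [hgD] with μ hμ
  rw [Real.norm_of_nonneg (Real.sqrt_nonneg _)]
  exact Real.sqrt_le_sqrt ((le_abs_self _).trans hμ)

theorem integral_integral_mul_deconvolutionKernel_mul_mem_Icc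
    (hK : AEStronglyMeasurable (fun p : α × β => K p.1 p.2) (ν.prod ν')) (hc : 0 < c)
    (hKc : ∀ᵐ p ∂ν.prod ν', c ≤ K p.1 p.2) (hKC : ∀ᵐ p ∂ν.prod ν', ‖K p.1 p.2‖ ≤ C)
    (hKint : ∀ᵐ μ ∂ν, ∫ x, K μ x ∂ν' = 1) (hg : AEStronglyMeasurable g ν) (hg0 : 0 ≤ᵐ[ν] g)
    (hgD : ∀ᵐ μ ∂ν, ‖g μ‖ ≤ D) (hg1 : ∫ μ, g μ ∂ν = 1) {h : α → ℝ} (hh : MemLp h 2 ν) :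
    ∫ μ₁, ∫ μ₂, h μ₁ * deconvolutionKernel ν ν' K g μ₁ μ₂ * h μ₂ ∂ν ∂ν
      ∈ Set.Icc 0 (∫ μ, h μ ^ 2 ∂ν) := by
  have hfc := ae_le_mixtureDensity hK hKc hKC hg0 hg1
  have hK0 : ∀ᵐ p ∂ν.prod ν', 0 ≤ K p.1 p.2 := hKc.mono fun _ hp => hc.le.trans hp
  have hnonneg : 0 ≤ᵐ[ν'] fun x =>
      (mixtureDensity ν K g x)⁻¹ * (∫ μ, h μ * (√(g μ) * K μ x) ∂ν) ^ 2 :=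
    hfc.mono fun x hx => mul_nonneg (inv_nonneg.2 (hc.le.trans hx)) (sq_nonneg _)
  rw [integral_integral_mul_deconvolutionKernel_mul hK hKC hg hgD hc hfc (hh.integrable one_le_two)]
  refine ⟨integral_nonneg_of_ae hnonneg, ?_⟩
  calc _ ≤ ∫ x, ∫ μ, h μ ^ 2 * K μ x ∂ν ∂ν' :=
        integral_mono_of_nonneg hnonneg (integrable_integral_mul_kernel hK hKC hh.integrable_sq)
          (ae_inv_mixtureDensity_mul_sq_le hK hK0 hKC hg hg0 hgD hh)
    _ = ∫ μ, h μ ^ 2 * ∫ x, K μ x * 1 ∂ν' ∂ν := by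
        rw [integral_mul_integral_kernel_comm hK hKC hh.integrable_sq aestronglyMeasurable_const
          (D := 1) (.of_forall fun _ => norm_one.le)]
        simp only [mul_one]
    _ = ∫ μ, h μ ^ 2 ∂ν := integral_congr_ae (hKint.mono fun μ hμ => by simp [hμ])

end Deconvolution

/-- Part of the proof of Theorem 1: the deconvolution operator with kernel
`P_{g₀}(μ₁,μ₂) = ∫_Ω √(g₀(μ₁)) K(μ₁,x) f₀(x)⁻¹ K(x,μ₂) √(g₀(μ₂)) dx` is positive with
operator norm at most one: for every square-integrable `h` on `Ω = [a,b]`,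
`0 ≤ ∬ h(μ₁) P_{g₀}(μ₁,μ₂) h(μ₂) dμ₁ dμ₂ ≤ ∫ h(μ)² dμ`. In particular all its
eigenvalues lie in `[0,1]`. -/
theorem stmt_5 (a b : ℝ) (hab : a < b)
    (K : ℝ → ℝ → ℝ) (g₀ : ℝ → ℝ)
    (hK : ContinuousOn (fun q : ℝ × ℝ => K q.1 q.2) (Set.Icc a b ×ˢ Set.Icc a b))
    (hKpos : ∀ μ ∈ Set.Icc a b, ∀ x ∈ Set.Icc a b, 0 < K μ x)
    (hKsymm : ∀ μ x, K μ x = K x μ)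
    (hKint : ∀ μ ∈ Set.Icc a b, ∫ x in Set.Icc a b, K μ x = 1)
    (hg₀ : ContinuousOn g₀ (Set.Icc a b))
    (hg₀pos : ∀ μ ∈ Set.Icc a b, 0 < g₀ μ)
    (hg₀int : ∫ μ in Set.Icc a b, g₀ μ = 1)
    (f₀ : ℝ → ℝ)
    (hf₀ : ∀ x, f₀ x = ∫ μ in Set.Icc a b, K μ x * g₀ μ)
    (P : ℝ → ℝ → ℝ)
    (hP : ∀ μ₁ μ₂, P μ₁ μ₂ =
      ∫ x in Set.Icc a b,
        Real.sqrt (g₀ μ₁) * K μ₁ x * (f₀ x)⁻¹ * K x μ₂ * Real.sqrt (g₀ μ₂)) :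
    ∀ h : ℝ → ℝ, MemLp h 2 (volume.restrict (Set.Icc a b)) →
      0 ≤ (∫ μ₁ in Set.Icc a b, ∫ μ₂ in Set.Icc a b, h μ₁ * P μ₁ μ₂ * h μ₂) ∧
      (∫ μ₁ in Set.Icc a b, ∫ μ₂ in Set.Icc a b, h μ₁ * P μ₁ μ₂ * h μ₂)
        ≤ ∫ μ in Set.Icc a b, h μ ^ 2 := by
  intro h hh
  set S := Set.Icc a b
  have hSS : IsCompact (S ×ˢ S) := isCompact_Icc.prod isCompact_Icc
  have hSSm : MeasurableSet (S ×ˢ S) := measurableSet_Icc.prod measurableSet_Icc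
  have hprod : (volume.restrict S).prod (volume.restrict S) = volume.restrict (S ×ˢ S) := by
    rw [Measure.prod_restrict, ← Measure.volume_eq_prod]
  have hPK : P = deconvolutionKernel (volume.restrict S) (volume.restrict S) K g₀ := by
    ext μ₁ μ₂
    refine (hP μ₁ μ₂).trans (integral_congr_ae (.of_forall fun x => ?_))
    simp only [hf₀, mixtureDensity, mul_comm (g₀ _), hKsymm x μ₂]
  obtain ⟨p, hpS, hpmin⟩ := hSS.exists_isMinOn ((Set.nonempty_Icc.2 hab.le).prod
    (Set.nonempty_Icc.2 hab.le)) hK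
  obtain ⟨C, hC⟩ := hSS.exists_bound_of_continuousOn hK
  obtain ⟨D, hD⟩ := isCompact_Icc.exists_bound_of_continuousOn hg₀
  rw [hPK, ← Set.mem_Icc]
  refine integral_integral_mul_deconvolutionKernel_mul_mem_Icc (c := K p.1 p.2) (C := C) ?_
    (hKpos _ hpS.1 _ hpS.2) ?_ ?_ (ae_restrict_of_forall_mem measurableSet_Icc hKint)
    (hg₀.aestronglyMeasurable measurableSet_Icc)
    (ae_restrict_of_forall_mem measurableSet_Icc fun μ hμ => (hg₀pos μ hμ).le)
    (ae_restrict_of_forall_mem measurableSet_Icc hD) hg₀int hh <;> rw [hprod]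
  · exact hK.aestronglyMeasurable hSSm
  · exact ae_restrict_of_forall_mem hSSm hpmin
  · exact ae_restrict_of_forall_mem hSSm hC
end

section
/- Let Ω ⊂ ℝ be a compact interval, K : Ω×Ω → (0,∞) a continuous symmetric kernel with ∫_Ω K(μ,x) dx = 1 for every μ ∈ Ω, and g₀ : Ω → (0,∞) a continuous probability density; set f₀(x) = ∫_Ω K(μ,x) g₀(μ) dμ and P_{g₀}(μ₁,μ₂) = ∫_Ω √(g₀(μ₁)) K(μ₁,x) f₀(x)^{-1} K(x,μ₂) √(g₀(μ₂)) dx. Suppose ζ₂, …, ζ_{p+1} are orthonormal functions in L²(Ω), each orthogonal to √g₀, with ∫_Ω P_{g₀}(μ₁,μ₂) ζ_i(μ₂) dμ₂ = λ_i ζ_i(μ₁) for 2 ≤ i ≤ p+1. Define T_j(μ) = ζ_{j+1}(μ)/√(g₀(μ)) for 1 ≤ j ≤ p. Then ∫_Ω T_j(μ) g₀(μ) dμ = 0, ∫_Ω T_j(μ) T_k(μ) g₀(μ) dμ = δ_{jk}, and the matrix M(T) with entries M(T)_{jk} = ∫_Ω (∫_Ω T_j(μ) K(μ,x) g₀(μ)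 dμ)(∫_Ω T_k(μ) K(μ,x) g₀(μ) dμ) f₀(x)^{-1} dx is diagonal with M(T)_{jk} = δ_{jk} λ_{j+1}. -/
/-!
With `w(μ, x) = √g₀(μ) K(μ, x)` the score `∫ T_j K g₀ dμ` is the transform `∫ ζ_j w(·, x) dμ`,
and `P(μ₁, μ₂) = ∫ w(μ₁, x) w(μ₂, x) / f₀(x) dx` by symmetry of `K`. Fubini turns the entry
`∫ (∫ ζ_j w)(∫ ζ_k w) / f₀ dx` of `M(T)` into `⟨ζ_j, P ζ_k⟩ = λ_k ⟨ζ_j, ζ_k⟩ = λ_k δ_jk`; the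
first two identities hold pointwise, as `T_j g₀ = ζ_j √g₀` and `T_j T_k g₀ = ζ_j ζ_k`.

Fubini needs `ζ_j` integrable, which holds once `ζ_j` is measurable, being square integrable on
a finite interval. A non-measurable `ζ_j` makes its score and `P ζ_j` vanish as junk integrals
(their weights are continuous and nonvanishing); then `λ_j ζ_j = 0` forces `λ_j = 0`, as `ζ_j ≠ 0`.
-/

open MeasureTheory

lemma integral_mul_eq_zero_of_not_aestronglyMeasurable {α : Type*} [MeasurableSpace α]
    {μ : Measure α} {φ ψ : α → ℝ} (hψ : AEStronglyMeasurable ψ μ) (hψ0 : ∀ᵐ x ∂μ, ψ x ≠ 0)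
    (hφ : ¬AEStronglyMeasurable φ μ) : ∫ x, φ x * ψ x ∂μ = 0 := by
  refine integral_undef fun h => hφ ?_
  refine (h.aestronglyMeasurable.aemeasurable.div hψ.aemeasurable).aestronglyMeasurable.congr ?_
  filter_upwards [hψ0] with x hx
  exact mul_div_cancel_right₀ _ hx

section CompactSets

variable {s t : Set ℝ} {φ f : ℝ → ℝ} {C : ℝ × ℝ → ℝ}

lemma integrableOn_of_integral_mul_self_ne_zero (hs : volume s ≠ ⊤)
    (hφ : AEStronglyMeasurable φ (volume.restrict s)) (h : ∫ x in s, φ x * φ x ≠ 0) :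
    IntegrableOn φ s := by
  have := isFiniteMeasure_restrict.2 hs
  refine ((memLp_two_iff_integrable_sq hφ).2 ?_).integrable one_le_two
  simpa only [sq] using Integrable.of_integral_ne_zero h

lemma integrable_prod_mul_of_continuousOn (hs : IsCompact s) (ht : IsCompact t)
    (hφ : IntegrableOn φ s) (hC : ContinuousOn C (s ×ˢ t)) :
    Integrable (fun z : ℝ × ℝ => φ z.1 * C z) ((volume.restrict s).prod (volume.restrict t)) := by
  have := isFiniteMeasure_restrict.2 (ht.measure_lt_top (μ := volume)).ne
  have hst : MeasurableSet (s ×ˢ t) := hs.measurableSet.prod ht.measurableSet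
  have hprod : (volume.restrict s).prod (volume.restrict t) = volume.restrict (s ×ˢ t) :=
    Measure.prod_restrict s t
  obtain ⟨B, hB⟩ := (hs.prod ht).exists_bound_of_continuousOn hC
  refine (hφ.comp_fst (ν := volume.restrict t)).mul_bdd (c := B) ?_ ?_
  · rw [hprod]; exact hC.aestronglyMeasurable hst
  · rw [hprod]; exact (ae_restrict_mem hst).mono hB

lemma setIntegral_setIntegral_swap_of_continuousOn (hs : IsCompact s) (ht : IsCompact t)
    (hφ : IntegrableOn φ s) (hC : ContinuousOn C (s ×ˢ t)) :
    ∫ x in t, ∫ μ in s, φ μ * C (μ, x) = ∫ μ in s, φ μ * ∫ x in t, C (μ, x) := by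
  simp_rw [← integral_const_mul]
  exact (integral_integral_swap (integrable_prod_mul_of_continuousOn hs ht hφ hC)).symm

lemma continuousOn_setIntegral_mul (hs : IsCompact s) (ht : IsCompact t) (hφ : IntegrableOn φ s)
    (hC : ContinuousOn C (s ×ˢ t)) :
    ContinuousOn (fun x => ∫ μ in s, φ μ * C (μ, x)) t := by
  obtain ⟨B, hB⟩ := (hs.prod ht).exists_bound_of_continuousOn hC
  refine continuousOn_of_dominated (bound := fun μ => ‖φ μ‖ * B) (fun x hx => ?_)
    (fun x hx => ?_) (hφ.norm.mul_const B) ?_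
  · exact hφ.aestronglyMeasurable.mul ((hC.comp (Continuous.prodMk_left x).continuousOn
      fun μ hμ => Set.mk_mem_prod hμ hx).aestronglyMeasurable hs.measurableSet)
  · filter_upwards [ae_restrict_mem hs.measurableSet] with μ hμ
    rw [norm_mul]
    exact mul_le_mul_of_nonneg_left (hB _ (Set.mk_mem_prod hμ hx)) (norm_nonneg _)
  · filter_upwards [ae_restrict_mem hs.measurableSet] with μ hμ
    exact continuousOn_const.mul (hC.comp (Continuous.prodMk_right μ).continuousOn
      fun x hx => Set.mk_mem_prod hμ hx)

lemma setIntegral_pos_of_continuousOn (ht : IsCompact t) (ht0 : volume t ≠ 0)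
    (hf : ContinuousOn f t) (hpos : ∀ x ∈ t, 0 < f x) : 0 < ∫ x in t, f x := by
  rw [setIntegral_pos_iff_support_of_nonneg_ae
    ((ae_restrict_mem ht.measurableSet).mono fun x hx => (hpos x hx).le)
    (hf.integrableOn_compact ht)]
  refine pos_iff_ne_zero.2 fun h => ht0 (measure_mono_null (fun x hx => ?_) h)
  exact Set.mem_inter (Function.mem_support.2 (hpos x hx).ne') hx

end CompactSets

section Kernel

variable {s t : Set ℝ} {w : ℝ → ℝ → ℝ} {h : ℝ → ℝ} {P : ℝ → ℝ → ℝ}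

lemma setIntegral_transform_mul_transform (hs : IsCompact s) (ht : IsCompact t)
    (hw : ContinuousOn (fun q : ℝ × ℝ => w q.1 q.2) (s ×ˢ t)) (hh : ContinuousOn h t)
    {φ ψ : ℝ → ℝ} (hφ : IntegrableOn φ s) (hψ : IntegrableOn ψ s) :
    ∫ x in t, (∫ μ in s, φ μ * w μ x) * (∫ μ in s, ψ μ * w μ x) * h x =
      ∫ μ₁ in s, φ μ₁ * ∫ μ₂ in s, (∫ x in t, w μ₁ x * h x * w μ₂ x) * ψ μ₂ := by
  set Ψ := fun x => ∫ μ in s, ψ μ * w μ x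
  have hΨ : ContinuousOn Ψ t := continuousOn_setIntegral_mul hs ht hψ hw
  have outer : ∫ x in t, (∫ μ in s, φ μ * w μ x) * Ψ x * h x =
      ∫ x in t, ∫ μ₁ in s, φ μ₁ * (w μ₁ x * (Ψ x * h x)) := by
    congr 1; funext x
    rw [mul_assoc, ← integral_mul_const]
    congr 1; funext μ₁; ring
  have inner : ∀ μ₁ ∈ s, ∫ x in t, w μ₁ x * (Ψ x * h x) =
      ∫ μ₂ in s, (∫ x in t, w μ₁ x * h x * w μ₂ x) * ψ μ₂ := by
    intro μ₁ hμ₁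
    have hC : ContinuousOn (fun z : ℝ × ℝ => w μ₁ z.2 * h z.2 * w z.1 z.2) (s ×ˢ t) :=
      ((hw.comp (continuous_const.prodMk continuous_snd).continuousOn
        fun z hz => Set.mk_mem_prod hμ₁ hz.2).mul
        (hh.comp continuous_snd.continuousOn fun z hz => hz.2)).mul hw
    calc ∫ x in t, w μ₁ x * (Ψ x * h x)
        = ∫ x in t, ∫ μ₂ in s, ψ μ₂ * (w μ₁ x * h x * w μ₂ x) := by
          congr 1; funext x
          rw [show w μ₁ x * (Ψ x * h x) = Ψ x * (w μ₁ x * h x) by ring, ← integral_mul_const]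
          congr 1; funext μ₂; ring
      _ = ∫ μ₂ in s, ψ μ₂ * ∫ x in t, w μ₁ x * h x * w μ₂ x :=
          setIntegral_setIntegral_swap_of_continuousOn hs ht hψ hC
      _ = _ := by simp_rw [mul_comm (ψ _)]
  have hC : ContinuousOn (fun z : ℝ × ℝ => w z.1 z.2 * (Ψ z.2 * h z.2)) (s ×ˢ t) :=
    hw.mul ((hΨ.mul hh).comp continuous_snd.continuousOn fun z hz => hz.2)
  rw [outer, setIntegral_setIntegral_swap_of_continuousOn hs ht hφ hC]
  exact setIntegral_congr_fun hs.measurableSet fun μ₁ hμ₁ => by rw [inner μ₁ hμ₁]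

lemma eigenvalue_eq_zero_of_not_aestronglyMeasurable {ζ : ℝ → ℝ} {lam : ℝ}
    (hs : MeasurableSet s) (hP : ∀ μ₁ ∈ s, ContinuousOn (P μ₁) s)
    (hP0 : ∀ μ₁ ∈ s, ∀ μ₂ ∈ s, P μ₁ μ₂ ≠ 0) (hnorm : ∫ μ in s, ζ μ * ζ μ = 1)
    (heig : ∀ μ₁ ∈ s, ∫ μ₂ in s, P μ₁ μ₂ * ζ μ₂ = lam * ζ μ₁)
    (hζ : ¬AEStronglyMeasurable ζ (volume.restrict s)) : lam = 0 := by
  by_contra hlam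
  have hzero : ∀ μ₁ ∈ s, ζ μ₁ = 0 := fun μ₁ hμ₁ => by
    have h := heig μ₁ hμ₁
    simp_rw [mul_comm (P μ₁ _)] at h
    rw [integral_mul_eq_zero_of_not_aestronglyMeasurable ((hP μ₁ hμ₁).aestronglyMeasurable hs)
      ((ae_restrict_mem hs).mono (hP0 μ₁ hμ₁)) hζ] at h
    exact (mul_eq_zero.1 h.symm).resolve_left hlam
  rw [setIntegral_eq_zero_of_forall_eq_zero fun μ hμ => by rw [hzero μ hμ, zero_mul]] at hnorm
  exact zero_ne_one hnorm

variable {ι : Type*} [DecidableEq ι] {ζ : ι → ℝ → ℝ} {lam : ι → ℝ}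

lemma setIntegral_transform_mul_transform_of_eigen (hs : IsCompact s) (ht : IsCompact t)
    (ht0 : volume t ≠ 0) (hw : ContinuousOn (fun q : ℝ × ℝ => w q.1 q.2) (s ×ˢ t))
    (hwpos : ∀ μ ∈ s, ∀ x ∈ t, 0 < w μ x) (hh : ContinuousOn h t) (hhpos : ∀ x ∈ t, 0 < h x)
    (hP : ∀ μ₁ μ₂, P μ₁ μ₂ = ∫ x in t, w μ₁ x * h x * w μ₂ x)
    (horth : ∀ j k, ∫ μ in s, ζ j μ * ζ k μ = if j = k then 1 else 0)
    (heig : ∀ j, ∀ μ₁ ∈ s, ∫ μ₂ in s, P μ₁ μ₂ * ζ j μ₂ = lam j * ζ j μ₁) (j k : ι) :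
    ∫ x in t, (∫ μ in s, ζ j μ * w μ x) * (∫ μ in s, ζ k μ * w μ x) * h x =
      if j = k then lam j else 0 := by
  by_cases hjk : AEStronglyMeasurable (ζ j) (volume.restrict s) ∧
      AEStronglyMeasurable (ζ k) (volume.restrict s)
  · have hint : ∀ i, AEStronglyMeasurable (ζ i) (volume.restrict s) → IntegrableOn (ζ i) s :=
      fun i hi =>
        integrableOn_of_integral_mul_self_ne_zero hs.measure_lt_top.ne hi (by simp [horth])
    rw [setIntegral_transform_mul_transform hs ht hw hh (hint j hjk.1) (hint k hjk.2)]
    calc _ = ∫ μ in s, lam k * (ζ j μ * ζ k μ) :=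
          setIntegral_congr_fun hs.measurableSet fun μ hμ => by
            simp_rw [← hP]; rw [heig k μ hμ]; ring
      _ = _ := by rw [integral_const_mul, horth]; split_ifs with h <;> simp [h]
  have hscore : ∀ i, ¬AEStronglyMeasurable (ζ i) (volume.restrict s) →
      ∀ x ∈ t, ∫ μ in s, ζ i μ * w μ x = 0 := fun i hi x hx =>
    integral_mul_eq_zero_of_not_aestronglyMeasurable
      ((hw.comp (Continuous.prodMk_left x).continuousOn fun μ hμ => Set.mk_mem_prod hμ hx)
        |>.aestronglyMeasurable hs.measurableSet)
      ((ae_restrict_mem hs.measurableSet).mono fun μ hμ => (hwpos μ hμ x hx).ne') hi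
  have hw_left : ∀ μ ∈ s, ContinuousOn (w μ) t := fun μ hμ =>
    hw.comp (Continuous.prodMk_right μ).continuousOn fun x hx => Set.mk_mem_prod hμ hx
  have hPcont : ∀ μ₁ ∈ s, ContinuousOn (P μ₁) s := fun μ₁ hμ₁ => by
    rw [funext (hP μ₁)]
    exact continuousOn_setIntegral_mul ht hs (((hw_left μ₁ hμ₁).mul hh).integrableOn_compact ht)
      (hw.comp continuous_swap.continuousOn fun z hz => Set.mk_mem_prod hz.2 hz.1)
  have hPpos : ∀ μ₁ ∈ s, ∀ μ₂ ∈ s, P μ₁ μ₂ ≠ 0 := fun μ₁ hμ₁ μ₂ hμ₂ => by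
    rw [hP]
    refine (setIntegral_pos_of_continuousOn ht ht0 ?_ fun x hx =>
      mul_pos (mul_pos (hwpos μ₁ hμ₁ x hx) (hhpos x hx)) (hwpos μ₂ hμ₂ x hx)).ne'
    exact ((hw_left μ₁ hμ₁).mul hh).mul (hw_left μ₂ hμ₂)
  rw [setIntegral_eq_zero_of_forall_eq_zero fun x hx => ?_]
  · split_ifs with h
    · subst h
      exact (eigenvalue_eq_zero_of_not_aestronglyMeasurable hs.measurableSet hPcont hPpos
        (by simpa using horth j j) (heig j) (by tauto)).symm
    · rfl
  · rcases not_and_or.1 hjk with h | h <;> simp [hscore _ h x hx]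

end Kernel

/-- `ζ j` and `lam j` stand for the paper's `ζ_{j+1}` and `λ_{j+1}`. -/
theorem stmt_7_general (a b : ℝ) (hab : a < b)
    (K : ℝ → ℝ → ℝ) (g₀ : ℝ → ℝ)
    (hK : ContinuousOn (fun q : ℝ × ℝ => K q.1 q.2) (Set.Icc a b ×ˢ Set.Icc a b))
    (hKpos : ∀ μ ∈ Set.Icc a b, ∀ x ∈ Set.Icc a b, 0 < K μ x)
    (hKsymm : ∀ μ x, K μ x = K x μ)
    (hg₀ : ContinuousOn g₀ (Set.Icc a b))
    (hg₀pos : ∀ μ ∈ Set.Icc a b, 0 < g₀ μ)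
    (f₀ : ℝ → ℝ)
    (hf₀ : ∀ x, f₀ x = ∫ μ in Set.Icc a b, K μ x * g₀ μ)
    (P : ℝ → ℝ → ℝ)
    (hP : ∀ μ₁ μ₂, P μ₁ μ₂ =
      ∫ x in Set.Icc a b,
        Real.sqrt (g₀ μ₁) * K μ₁ x * (f₀ x)⁻¹ * K x μ₂ * Real.sqrt (g₀ μ₂))
    (p : ℕ)
    (ζ : Fin p → ℝ → ℝ) (lam : Fin p → ℝ)
    (horth : ∀ j k, ∫ μ in Set.Icc a b, ζ j μ * ζ k μ = if j = k then 1 else 0)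
    (hperp : ∀ j, ∫ μ in Set.Icc a b, ζ j μ * Real.sqrt (g₀ μ) = 0)
    (heig : ∀ j, ∀ μ₁ ∈ Set.Icc a b,
      ∫ μ₂ in Set.Icc a b, P μ₁ μ₂ * ζ j μ₂ = lam j * ζ j μ₁)
    (T : Fin p → ℝ → ℝ)
    (hT : ∀ j, ∀ μ ∈ Set.Icc a b, T j μ = ζ j μ / Real.sqrt (g₀ μ)) :
    (∀ j, ∫ μ in Set.Icc a b, T j μ * g₀ μ = 0) ∧
    (∀ j k, ∫ μ in Set.Icc a b, T j μ * T k μ * g₀ μ = if j = k then 1 else 0) ∧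
    (∀ j k,
      (∫ x in Set.Icc a b,
        (∫ μ in Set.Icc a b, T j μ * K μ x * g₀ μ) *
          (∫ μ in Set.Icc a b, T k μ * K μ x * g₀ μ) * (f₀ x)⁻¹)
        = if j = k then lam j else 0) := by
  set s := Set.Icc a b
  have hs : IsCompact s := isCompact_Icc
  have hs0 : volume s ≠ 0 := by simp [s, Real.volume_Icc, hab]
  have hTg : ∀ j, ∀ μ ∈ s, T j μ * g₀ μ = ζ j μ * √(g₀ μ) := fun j μ hμ => by
    rw [hT j μ hμ, div_mul_eq_mul_div, mul_div_assoc, Real.div_sqrt]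
  have hf₀c : ContinuousOn f₀ s :=
    (continuousOn_setIntegral_mul hs hs (hg₀.integrableOn_compact hs) hK).congr fun x _ => by
      simp only [hf₀, mul_comm]
  have hf₀pos : ∀ x ∈ s, 0 < f₀ x := fun x hx => hf₀ x ▸ setIntegral_pos_of_continuousOn hs hs0
    ((hK.comp (Continuous.prodMk_left x).continuousOn fun μ hμ => Set.mk_mem_prod hμ hx).mul hg₀)
    fun μ hμ => mul_pos (hKpos μ hμ x hx) (hg₀pos μ hμ)
  refine ⟨fun j => ?_, fun j k => ?_, fun j k => ?_⟩
  · rw [← hperp j]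
    exact setIntegral_congr_fun measurableSet_Icc (hTg j)
  · rw [← horth j k]
    refine setIntegral_congr_fun measurableSet_Icc fun μ hμ => ?_
    rw [hT j μ hμ, hT k μ hμ, div_mul_div_comm, Real.mul_self_sqrt (hg₀pos μ hμ).le,
      div_mul_cancel₀ _ (hg₀pos μ hμ).ne']
  · have hscore : ∀ i x, ∫ μ in s, T i μ * K μ x * g₀ μ = ∫ μ in s, ζ i μ * (√(g₀ μ) * K μ x) :=
      fun i x => setIntegral_congr_fun measurableSet_Icc fun μ hμ => by
        rw [mul_right_comm, hTg i μ hμ, mul_assoc]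
    simp only [hscore]
    refine setIntegral_transform_mul_transform_of_eigen hs hs hs0
      ((hg₀.sqrt.comp continuous_fst.continuousOn fun q hq => hq.1).mul hK)
      (fun μ hμ x hx => mul_pos (Real.sqrt_pos.2 (hg₀pos μ hμ)) (hKpos μ hμ x hx))
      (hf₀c.inv₀ fun x hx => (hf₀pos x hx).ne') (fun x hx => inv_pos.2 (hf₀pos x hx))
      (fun μ₁ μ₂ => ?_) horth heig j k
    rw [hP]
    congr 1; funext x
    rw [hKsymm x μ₂, Pi.inv_apply]; ring

/-- The attainment part of Theorem 1: if `ζ₂, …, ζ_{p+1}` are orthonormal eigenfunctions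
of `P_{g₀}` (each orthogonal to `√g₀`) with eigenvalues `λ₂, …, λ_{p+1}`, then the
statistics `T_j = ζ_{j+1}/√g₀` are centered and `g₀`-orthonormal (so the `μ`-sample
Fisher information is the identity) and the `X`-sample Fisher information matrix `M(T)`
is diagonal with entries `λ₂, …, λ_{p+1}`.  Here `ζ` and `lam` are indexed by `Fin p`,
with `ζ j` playing the role of `ζ_{j+1}` and `lam j` that of `λ_{j+1}`. -/
theorem stmt_7 (a b : ℝ) (hab : a < b)
    (K : ℝ → ℝ → ℝ) (g₀ : ℝ → ℝ)
    (hK : ContinuousOn (fun q : ℝ × ℝ => K q.1 q.2) (Set.Icc a b ×ˢ Set.Icc a b))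
    (hKpos : ∀ μ ∈ Set.Icc a b, ∀ x ∈ Set.Icc a b, 0 < K μ x)
    (hKsymm : ∀ μ x, K μ x = K x μ)
    (hKint : ∀ μ ∈ Set.Icc a b, ∫ x in Set.Icc a b, K μ x = 1)
    (hg₀ : ContinuousOn g₀ (Set.Icc a b))
    (hg₀pos : ∀ μ ∈ Set.Icc a b, 0 < g₀ μ)
    (hg₀int : ∫ μ in Set.Icc a b, g₀ μ = 1)
    (f₀ : ℝ → ℝ)
    (hf₀ : ∀ x, f₀ x = ∫ μ in Set.Icc a b, K μ x * g₀ μ)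
    (P : ℝ → ℝ → ℝ)
    (hP : ∀ μ₁ μ₂, P μ₁ μ₂ =
      ∫ x in Set.Icc a b,
        Real.sqrt (g₀ μ₁) * K μ₁ x * (f₀ x)⁻¹ * K x μ₂ * Real.sqrt (g₀ μ₂))
    (p : ℕ)
    (ζ : Fin p → ℝ → ℝ) (lam : Fin p → ℝ)
    (horth : ∀ j k, ∫ μ in Set.Icc a b, ζ j μ * ζ k μ = if j = k then 1 else 0)
    (hperp : ∀ j, ∫ μ in Set.Icc a b, ζ j μ * Real.sqrt (g₀ μ) = 0)
    (heig : ∀ j, ∀ μ₁ ∈ Set.Icc a b,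
      ∫ μ₂ in Set.Icc a b, P μ₁ μ₂ * ζ j μ₂ = lam j * ζ j μ₁)
    (T : Fin p → ℝ → ℝ)
    (hT : ∀ j, ∀ μ ∈ Set.Icc a b, T j μ = ζ j μ / Real.sqrt (g₀ μ)) :
    (∀ j, ∫ μ in Set.Icc a b, T j μ * g₀ μ = 0) ∧
    (∀ j k, ∫ μ in Set.Icc a b, T j μ * T k μ * g₀ μ = if j = k then 1 else 0) ∧
    (∀ j k,
      (∫ x in Set.Icc a b,
        (∫ μ in Set.Icc a b, T j μ * K μ x * g₀ μ) *
          (∫ μ in Set.Icc a b, T k μ * K μ x * g₀ μ) * (f₀ x)⁻¹)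
        = if j = k then lam j else 0) :=
  stmt_7_general a b hab K g₀ hK hKpos hKsymm hg₀ hg₀pos f₀ hf₀ P hP p ζ lam horth hperp heig T hT
end

section
/- Let φ(s) = (2π)^{-1/2} e^{−s²/2}, let σ > 0, g_σ(μ) = σ^{-1} φ(μ/σ), and let H_j(s) = (1/√(j!)) e^{s²/2} (d/ds)^j e^{−s²/2} denote the normalized Hermite polynomials. Then for every integer j ≥ 0 and every x ∈ ℝ, ∫_ℝ φ(x−μ) g_σ(μ) H_j(μ/σ) dμ = (σ/√(1+σ²))^j · (1+σ²)^{-1/2} φ(x/√(1+σ²)) H_j(x/√(1+σ²)). -/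
/-- The standard Gaussian density `φ(s) = (2π)^{-1/2} e^{-s²/2}`. -/
noncomputable def gaussDens (s : ℝ) : ℝ :=
  (Real.sqrt (2 * Real.pi))⁻¹ * Real.exp (-s ^ 2 / 2)

/-- The normalized Hermite polynomials
`H_j(s) = (1/√(j!)) e^{s²/2} (d/ds)^j e^{-s²/2}`. -/
noncomputable def hermiteN (j : ℕ) (s : ℝ) : ℝ :=
  (Real.sqrt (Nat.factorial j))⁻¹ * Real.exp (s ^ 2 / 2) *
    iteratedDeriv j (fun u => Real.exp (-u ^ 2 / 2)) s

/-!
Write `H_j = (-1)^j He_j / √(j!)` with `He_j = Polynomial.hermite j`. Completing the square turns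
`φ(x - μ) g_σ(μ)` into `τ⁻¹ φ(x/τ)` times a Gaussian density in `μ` of standard deviation `σ/τ`,
where `τ² = 1 + σ²`. After the substitution `μ = (σ/τ) u + σ² x / τ²` the claim becomes
`E[He_j(a Z + b)] = s^j He_j(b/s)` for a standard Gaussian `Z` and `a² + s² = 1`, which follows by
two-step induction from `He_{n+1} = X He_n - He_n'`, `He_n' = n He_{n-1}` and Gaussian integration
by parts.
-/

open Real MeasureTheory Polynomial

lemma gaussDens_eq_mul_exp (u : ℝ) : gaussDens u = (√(2 * π))⁻¹ * exp (-(1 / 2) * u ^ 2) := by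
  rw [gaussDens]; ring_nf

lemma hasDerivAt_gaussDens (u : ℝ) : HasDerivAt gaussDens (-u * gaussDens u) u := by
  have h := ((((hasDerivAt_pow 2 u).const_mul (-(1 / 2) : ℝ)).exp).const_mul (√(2 * π))⁻¹)
  rw [show gaussDens = _ from funext gaussDens_eq_mul_exp]
  exact h.congr_deriv (by push_cast; ring)

lemma integral_gaussDens : ∫ u, gaussDens u = 1 := by
  simp_rw [gaussDens_eq_mul_exp, integral_const_mul, integral_gaussian]
  rw [div_div_eq_mul_div, div_one, mul_comm π 2]
  exact inv_mul_cancel₀ (by positivity)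

lemma integrable_gaussDens_mul_eval (q : ℝ[X]) : Integrable fun u => gaussDens u * q.eval u := by
  induction q using Polynomial.induction_on' with
  | add p q hp hq => simpa only [eval_add, mul_add, Pi.add_def] using hp.add hq
  | monomial n c =>
    have h := (integrable_rpow_mul_exp_neg_mul_sq (b := 1 / 2) (by norm_num)
      (s := n) (by linarith [n.cast_nonneg (α := ℝ)])).const_mul (c * (√(2 * π))⁻¹)
    refine h.congr (Filter.Eventually.of_forall fun u => ?_)
    simp only [eval_monomial, gaussDens_eq_mul_exp, rpow_natCast]; ring

section
variable {R : Type*} [CommSemiring R] [Algebra R ℝ]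

lemma aeval_mul_add_eq_eval_comp (p : R[X]) (a b u : ℝ) :
    aeval (a * u + b) p = ((p.map (algebraMap R ℝ)).comp (C a * X + C b)).eval u := by
  simp

lemma integrable_gaussDens_mul_aeval (p : R[X]) (a b : ℝ) :
    Integrable fun u => gaussDens u * aeval (a * u + b) p := by
  refine (integrable_gaussDens_mul_eval ((p.map (algebraMap R ℝ)).comp (C a * X + C b))).congr
    (Filter.Eventually.of_forall fun u => ?_)
  dsimp only; rw [aeval_mul_add_eq_eval_comp]

lemma integrable_mul_gaussDens_mul_aeval (p : R[X]) (a b : ℝ) :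
    Integrable fun u => u * gaussDens u * aeval (a * u + b) p := by
  refine (integrable_gaussDens_mul_eval (X * (p.map (algebraMap R ℝ)).comp (C a * X + C b))).congr
    (Filter.Eventually.of_forall fun u => ?_)
  simp only [eval_mul, eval_X, ← aeval_mul_add_eq_eval_comp]; ring

/-- Stein's identity `E[Z f(Z)] = E[f'(Z)]`, for `f = p(a · + b)`. -/
lemma integral_mul_gaussDens_mul_aeval (p : R[X]) (a b : ℝ) :
    ∫ u, u * gaussDens u * aeval (a * u + b) p
      = a * ∫ u, gaussDens u * aeval (a * u + b) (derivative p) := by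
  have hp (u : ℝ) :
      HasDerivAt (fun u => aeval (a * u + b) p) (aeval (a * u + b) (derivative p) * a) u :=
    (Polynomial.hasDerivAt_aeval p _).comp u
      (((hasDerivAt_id u).const_mul a).add_const b |>.congr_deriv (mul_one a))
  have h := integral_mul_deriv_eq_deriv_mul_of_integrable (u := fun u => aeval (a * u + b) p)
    (v := fun u => -gaussDens u) (fun u _ => hp u) (fun u _ => (hasDerivAt_gaussDens u).neg)
    ((integrable_mul_gaussDens_mul_aeval p a b).congr
      (Filter.Eventually.of_forall fun u => by simp only [Pi.mul_apply]; ring))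
    (((integrable_gaussDens_mul_aeval (derivative p) a b).const_mul (-a)).congr
      (Filter.Eventually.of_forall fun u => by simp only [Pi.mul_apply]; ring))
    ((integrable_gaussDens_mul_aeval p a b).neg.congr
      (Filter.Eventually.of_forall fun u => by simp only [Pi.neg_apply, Pi.mul_apply]; ring))
  simp only [neg_mul, neg_neg, mul_neg, integral_neg] at h
  calc ∫ u, u * gaussDens u * aeval (a * u + b) p
      = ∫ u, aeval (a * u + b) p * (u * gaussDens u) :=
        integral_congr_ae (.of_forall fun u => by ring)
    _ = ∫ u, aeval (a * u + b) (derivative p) * a * gaussDens u := h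
    _ = a * ∫ u, gaussDens u * aeval (a * u + b) (derivative p) := by
      rw [← integral_const_mul]; exact integral_congr_ae (.of_forall fun u => by ring)
end

lemma integral_gaussDens_mul_aeval_X_mul_sub_derivative {R : Type*} [CommRing R] [Algebra R ℝ]
    (p : R[X]) (a b : ℝ) :
    ∫ u, gaussDens u * aeval (a * u + b) (X * p - derivative p)
      = b * (∫ u, gaussDens u * aeval (a * u + b) p)
        - (1 - a ^ 2) * ∫ u, gaussDens u * aeval (a * u + b) (derivative p) := by
  have hu := (integrable_mul_gaussDens_mul_aeval p a b).const_mul a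
  have h1 := (integrable_gaussDens_mul_aeval p a b).const_mul b
  have h' := integrable_gaussDens_mul_aeval (derivative p) a b
  calc ∫ u, gaussDens u * aeval (a * u + b) (X * p - derivative p)
      = ∫ u, a * (u * gaussDens u * aeval (a * u + b) p) + b * (gaussDens u * aeval (a * u + b) p)
          - gaussDens u * aeval (a * u + b) (derivative p) :=
        integral_congr_ae (.of_forall fun u => by simp only [map_sub, map_mul, aeval_X]; ring)
    _ = _ := by
      rw [integral_sub (by exact hu.add h1) h', integral_add hu h1, integral_const_mul,
        integral_const_mul, integral_mul_gaussDens_mul_aeval]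
      ring

lemma derivative_hermite_succ (n : ℕ) :
    derivative (hermite (n + 1)) = (n + 1 : ℤ[X]) * hermite n := by
  induction n with
  | zero => simp [hermite_zero]
  | succ n ih =>
    rw [hermite_succ (n + 1), derivative_sub, derivative_mul, derivative_X, one_mul, ih,
      derivative_mul, hermite_succ n]
    simp only [derivative_add, derivative_natCast, derivative_one]
    push_cast; ring

lemma integral_gaussDens_mul_aeval_hermite {a s : ℝ} (hs : s ≠ 0) (has : a ^ 2 + s ^ 2 = 1)
    (b : ℝ) (n : ℕ) :
    ∫ u, gaussDens u * aeval (a * u + b) (hermite n) = s ^ n * aeval (b / s) (hermite n) := by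
  have h1a : 1 - a ^ 2 = s ^ 2 := by linarith
  induction n using Nat.twoStepInduction with
  | zero => simp [integral_gaussDens]
  | one =>
    rw [show hermite 1 = X * hermite 0 - derivative (hermite 0) from hermite_succ 0,
      integral_gaussDens_mul_aeval_X_mul_sub_derivative]
    simp only [hermite_zero, map_one, mul_one, integral_gaussDens,
      derivative_one, map_zero, mul_zero, integral_zero, sub_zero, pow_one, aeval_X]
    field_simp
  | more n ih0 ih1 =>
    rw [hermite_succ (n + 1), integral_gaussDens_mul_aeval_X_mul_sub_derivative, ih1,
      derivative_hermite_succ]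
    simp only [map_mul, map_add, map_natCast, map_one, map_sub, aeval_X]
    simp_rw [mul_left_comm (gaussDens _)]
    rw [integral_const_mul, ih0, h1a]
    field_simp
    ring

lemma hermiteN_eq_aeval_hermite (j : ℕ) (t : ℝ) :
    hermiteN j t = (-1) ^ j * (√(j.factorial : ℝ))⁻¹ * aeval t (hermite j) := by
  rw [hermite_eq_deriv_gaussian', hermiteN, iteratedDeriv_eq_iterate]
  simp only [neg_div]
  have hsign : ((-1 : ℝ) ^ j) ^ 2 = 1 := by
    rw [← pow_mul, mul_comm, pow_mul, neg_one_sq, one_pow]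
  linear_combination (-(√(j.factorial : ℝ))⁻¹ * exp (t ^ 2 / 2)
    * deriv^[j] (fun u => exp (-(u ^ 2 / 2))) t) * hsign

lemma gaussDens_sub_mul_gaussDens_div {σ τ : ℝ} (hσ : σ ≠ 0) (hτ : τ ^ 2 = 1 + σ ^ 2) (x μ : ℝ) :
    gaussDens (x - μ) * (σ⁻¹ * gaussDens (μ / σ))
      = τ⁻¹ * gaussDens (x / τ) * ((σ / τ)⁻¹ * gaussDens ((μ - σ ^ 2 * x / τ ^ 2) / (σ / τ))) := by
  have hτ0 : τ ≠ 0 := by rintro rfl; nlinarith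
  have hexp : -(x - μ) ^ 2 / 2 + -(μ / σ) ^ 2 / 2
      = -(x / τ) ^ 2 / 2 + -((μ - σ ^ 2 * x / τ ^ 2) / (σ / τ)) ^ 2 / 2 := by
    field_simp
    rw [hτ]
    ring
  simp only [gaussDens]
  calc _ = (√(2 * π))⁻¹ * (√(2 * π))⁻¹ * σ⁻¹ * exp (-(x - μ) ^ 2 / 2 + -(μ / σ) ^ 2 / 2) := by
        rw [exp_add]; ring
    _ = _ := by rw [hexp, exp_add]; field_simp

lemma integral_inv_mul_gaussDens_div_mul {s : ℝ} (hs : 0 < s) (m : ℝ) (f : ℝ → ℝ) :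
    ∫ μ, s⁻¹ * gaussDens ((μ - m) / s) * f μ = ∫ u, gaussDens u * f (s * u + m) := by
  set G : ℝ → ℝ := fun y => s⁻¹ * gaussDens (y / s) * f (y + m)
  have h : ∫ u, G (s * u) = s⁻¹ * ∫ y, G y := by
    rw [Measure.integral_comp_mul_left, abs_inv, abs_of_pos hs, smul_eq_mul]
  calc ∫ μ, s⁻¹ * gaussDens ((μ - m) / s) * f μ = ∫ y, G y := by
        rw [← integral_add_right_eq_self _ m]; simp only [G, add_sub_cancel_right]
    _ = s * ∫ u, G (s * u) := by rw [h]; field_simp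
    _ = ∫ u, gaussDens u * f (s * u + m) := by
        rw [← integral_const_mul]
        exact integral_congr_ae (.of_forall fun u => by simp only [G]; field_simp)

lemma integral_gaussDens_sub_mul_gaussDens_div_mul_aeval_hermite {σ : ℝ} (hσ : 0 < σ)
    (j : ℕ) (x : ℝ) :
    ∫ μ, gaussDens (x - μ) * (σ⁻¹ * gaussDens (μ / σ)) * aeval (μ / σ) (hermite j)
      = (σ / √(1 + σ ^ 2)) ^ j *
          ((√(1 + σ ^ 2))⁻¹ * gaussDens (x / √(1 + σ ^ 2)) *
            aeval (x / √(1 + σ ^ 2)) (hermite j)) := by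
  set τ := √(1 + σ ^ 2)
  have hτ : τ ^ 2 = 1 + σ ^ 2 := sq_sqrt (by positivity)
  have hτ0 : 0 < τ := sqrt_pos.2 (by positivity)
  have hunit : τ⁻¹ ^ 2 + (σ / τ) ^ 2 = 1 := by field_simp; linarith
  calc ∫ μ, gaussDens (x - μ) * (σ⁻¹ * gaussDens (μ / σ)) * aeval (μ / σ) (hermite j)
      = τ⁻¹ * gaussDens (x / τ) * ∫ μ, (σ / τ)⁻¹ * gaussDens ((μ - σ ^ 2 * x / τ ^ 2) / (σ / τ))
          * aeval (μ / σ) (hermite j) := by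
        rw [← integral_const_mul]
        refine integral_congr_ae (.of_forall fun μ => ?_)
        dsimp only
        rw [gaussDens_sub_mul_gaussDens_div hσ.ne' hτ]; ring
    _ = τ⁻¹ * gaussDens (x / τ) *
          ∫ u, gaussDens u * aeval (τ⁻¹ * u + σ * x / τ ^ 2) (hermite j) := by
        rw [integral_inv_mul_gaussDens_div_mul (div_pos hσ hτ0)]
        congr 1
        refine integral_congr_ae (.of_forall fun u => ?_)
        field_simp
    _ = _ := by
        rw [integral_gaussDens_mul_aeval_hermite (div_pos hσ hτ0).ne' hunit]
        field_simp

/-- The Gaussian–Hermite convolution identity from the proof of Theorem 2: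
`∫ φ(x−μ) g_σ(μ) H_j(μ/σ) dμ
  = (σ/√(1+σ²))^j (1+σ²)^{-1/2} φ(x/√(1+σ²)) H_j(x/√(1+σ²))`,
where `g_σ(μ) = σ⁻¹ φ(μ/σ)`. -/
theorem stmt_8 (σ : ℝ) (hσ : 0 < σ) (j : ℕ) (x : ℝ) :
    ∫ μ : ℝ, gaussDens (x - μ) * (σ⁻¹ * gaussDens (μ / σ)) * hermiteN j (μ / σ)
      = (σ / Real.sqrt (1 + σ ^ 2)) ^ j *
          ((Real.sqrt (1 + σ ^ 2))⁻¹ * gaussDens (x / Real.sqrt (1 + σ ^ 2)) *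
            hermiteN j (x / Real.sqrt (1 + σ ^ 2))) := by
  calc _ = (-1) ^ j * (√(j.factorial : ℝ))⁻¹ *
        ∫ μ, gaussDens (x - μ) * (σ⁻¹ * gaussDens (μ / σ)) * aeval (μ / σ) (hermite j) := by
        rw [← integral_const_mul]
        exact integral_congr_ae (.of_forall fun μ => by simp only [hermiteN_eq_aeval_hermite]; ring)
    _ = _ := by
        rw [integral_gaussDens_sub_mul_gaussDens_div_mul_aeval_hermite hσ,
          hermiteN_eq_aeval_hermite]
        ring
end

section
/- Let σ > 0 and κ > 1, and set r = √(1+σ²)/σ (so r² = (1+σ²)/σ² and 1/(r²−1) = σ²). Suppose C > 0 is such that p := ⌈log(C/σ)/log(rκ)⌉ − 1 satisfies p ≥ 2. Then Σ_{j=1}^{p} r^{2j} + C² κ^{−2(p+1)} ≤ (1 + r²) · σ^{2 log κ/(log r + log κ)} · C^{2 log r/(log r + log κ)}. -/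
/-!
With `x = log_{rκ}(C/σ)` the choice of `p` means `p < x ≤ p + 1`, and `C = σ (rκ)^x`.
Put `D = (σ r^x)²`; the weighted geometric mean on the right-hand side is exactly `(1 + r²) D`.
Since `1/(r² - 1) = σ²`, the geometric sum is at most `σ² r^(2(p+1)) ≤ r² D`, and the tail is
`C² κ^(-2(p+1)) = D κ^(2(x - p - 1)) ≤ D`.
-/

open Finset Real

theorem sum_Icc_pow_le_div {a : ℝ} (ha : 1 < a) (p : ℕ) :
    ∑ j ∈ Icc 1 p, a ^ j ≤ a ^ (p + 1) / (a - 1) := by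
  have hsub : Icc 1 p ⊆ range (p + 1) := fun j hj => by simp only [mem_Icc, mem_range] at hj ⊢; omega
  have ha1 : 0 < a - 1 := by linarith
  calc ∑ j ∈ Icc 1 p, a ^ j
      ≤ ∑ j ∈ range (p + 1), a ^ j :=
        sum_le_sum_of_subset_of_nonneg hsub fun j _ _ => by positivity
    _ = (a ^ (p + 1) - 1) / (a - 1) := geom_sum_eq ha.ne' _
    _ ≤ a ^ (p + 1) / (a - 1) := by gcongr; linarith

theorem one_lt_sqrt_one_add_sq_div {σ : ℝ} (hσ : 0 < σ) : 1 < √(1 + σ ^ 2) / σ := by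
  rw [lt_div_iff₀ hσ, one_mul, lt_sqrt hσ.le]
  linarith

theorem sq_sqrt_one_add_sq_div_sub_one {σ : ℝ} (hσ : σ ≠ 0) :
    (√(1 + σ ^ 2) / σ) ^ 2 - 1 = (σ ^ 2)⁻¹ := by
  rw [div_pow, sq_sqrt (by positivity)]
  field_simp
  ring

theorem sum_Icc_sqrt_one_add_sq_div_pow_le {σ : ℝ} (hσ : 0 < σ) (p : ℕ) :
    ∑ j ∈ Icc 1 p, (√(1 + σ ^ 2) / σ) ^ (2 * j)
      ≤ (√(1 + σ ^ 2) / σ) ^ 2 * (σ * (√(1 + σ ^ 2) / σ) ^ p) ^ 2 := by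
  set r := √(1 + σ ^ 2) / σ
  have hr : r ^ 2 - 1 = (σ ^ 2)⁻¹ := sq_sqrt_one_add_sq_div_sub_one hσ.ne'
  have hr1 : 1 < r ^ 2 := by linarith [inv_pos.2 (pow_pos hσ 2)]
  calc ∑ j ∈ Icc 1 p, r ^ (2 * j)
      = ∑ j ∈ Icc 1 p, (r ^ 2) ^ j := by simp only [pow_mul]
    _ ≤ (r ^ 2) ^ (p + 1) / (r ^ 2 - 1) := sum_Icc_pow_le_div hr1 p
    _ = r ^ 2 * (σ * r ^ p) ^ 2 := by rw [hr, div_inv_eq_mul]; ring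

theorem sq_mul_inv_pow_le {σ a b x : ℝ} (ha : 0 < a) (hb : 1 ≤ b) {n : ℕ} (hx : x ≤ n) :
    (σ * (a * b) ^ x) ^ 2 * (b ^ (2 * n))⁻¹ ≤ (σ * a ^ x) ^ 2 := by
  have hb0 : 0 < b := by linarith
  have hbx : b ^ x ≤ b ^ n := by
    rw [← rpow_natCast]; exact rpow_le_rpow_of_exponent_le hb hx
  calc (σ * (a * b) ^ x) ^ 2 * (b ^ (2 * n))⁻¹
      = (σ * a ^ x) ^ 2 * (b ^ x / b ^ n) ^ 2 := by
        rw [mul_rpow ha.le hb0.le, pow_mul']; field_simp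
    _ ≤ (σ * a ^ x) ^ 2 * 1 ^ 2 := by
        gcongr; exact (div_le_one (by positivity)).2 hbx
    _ = (σ * a ^ x) ^ 2 := by ring

theorem rpow_mul_rpow_eq_sq {σ C a b : ℝ} (hσ : 0 < σ) (hC : 0 < C) (ha : 0 < a) (hb : 0 < b)
    (hab : log a + log b ≠ 0) :
    σ ^ (2 * log b / (log a + log b)) * C ^ (2 * log a / (log a + log b))
      = (σ * a ^ logb (a * b) (C / σ)) ^ 2 := by
  refine log_injOn_pos (Set.mem_Ioi.2 (by positivity)) (Set.mem_Ioi.2 (by positivity)) ?_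
  rw [log_mul (by positivity) (by positivity), log_pow, log_mul hσ.ne' (by positivity),
    log_rpow hσ, log_rpow hC, log_rpow ha, logb, log_mul ha.ne' hb.ne',
    log_div hC.ne' hσ.ne']
  field_simp
  push_cast
  ring

theorem lt_and_le_of_eq_ceil_sub_one {y : ℝ} {p : ℤ} (h : p = ⌈y⌉ - 1) :
    (p : ℝ) < y ∧ y ≤ p + 1 := by
  have := Int.ceil_eq_iff.1 (eq_add_of_sub_eq h.symm)
  push_cast at this
  constructor <;> linarith [this.1, this.2]

theorem stmt_16_general (σ κ : ℝ) (hσ : 0 < σ) (hκ : 1 < κ)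
    (r : ℝ) (hr : r = Real.sqrt (1 + σ ^ 2) / σ)
    (C : ℝ) (hC : 0 < C)
    (p : ℕ)
    (hpdef : (p : ℤ) = ⌈Real.log (C / σ) / Real.log (r * κ)⌉ - 1) :
    (∑ j ∈ Finset.Icc 1 p, r ^ (2 * j)) + C ^ 2 * (κ ^ (2 * (p + 1)))⁻¹
      ≤ (1 + r ^ 2) *
          σ ^ (2 * Real.log κ / (Real.log r + Real.log κ) : ℝ) *
          C ^ (2 * Real.log r / (Real.log r + Real.log κ) : ℝ) := by
  have hr1 : 1 < r := hr ▸ one_lt_sqrt_one_add_sq_div hσ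
  have hrκ : 1 < r * κ := one_lt_mul_of_lt_of_le hr1 hκ.le
  set x := logb (r * κ) (C / σ)
  obtain ⟨hpx, hxp⟩ : (p : ℝ) < x ∧ x ≤ (p : ℤ) + 1 := lt_and_le_of_eq_ceil_sub_one hpdef
  have hC_eq : C = σ * (r * κ) ^ x := by
    rw [rpow_logb (by linarith) hrκ.ne' (by positivity)]; field_simp
  have hsum : ∑ j ∈ Icc 1 p, r ^ (2 * j) ≤ r ^ 2 * (σ * r ^ x) ^ 2 := by
    have hrp : r ^ p ≤ r ^ x := by
      rw [← rpow_natCast]; exact rpow_le_rpow_of_exponent_le hr1.le hpx.le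
    calc ∑ j ∈ Icc 1 p, r ^ (2 * j) ≤ r ^ 2 * (σ * r ^ p) ^ 2 :=
          hr ▸ sum_Icc_sqrt_one_add_sq_div_pow_le hσ p
      _ ≤ r ^ 2 * (σ * r ^ x) ^ 2 := by gcongr
  have htail : C ^ 2 * (κ ^ (2 * (p + 1)))⁻¹ ≤ (σ * r ^ x) ^ 2 := by
    rw [hC_eq]; exact sq_mul_inv_pow_le (by linarith) hκ.le (by exact_mod_cast hxp)
  rw [mul_assoc, rpow_mul_rpow_eq_sq hσ hC (by linarith) (by linarith)
    (by linarith [log_pos hr1, log_pos hκ])]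
  linarith

/-- The key inequality in the proof of Lemma 4: for `σ > 0`, `κ > 1`,
`r = √(1+σ²)/σ`, and `C > 0` such that `p = ⌈log(C/σ)/log(rκ)⌉ − 1` satisfies `p ≥ 2`,
`Σ_{j=1}^p r^{2j} + C² κ^{−2(p+1)}
   ≤ (1+r²) · σ^{2 log κ/(log r + log κ)} · C^{2 log r/(log r + log κ)}`.
The powers of `σ` and `C` on the right-hand side are real (rpow) powers. -/
theorem stmt_16 (σ κ : ℝ) (hσ : 0 < σ) (hκ : 1 < κ)
    (r : ℝ) (hr : r = Real.sqrt (1 + σ ^ 2) / σ)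
    (C : ℝ) (hC : 0 < C)
    (p : ℕ) (hp : 2 ≤ p)
    (hpdef : (p : ℤ) = ⌈Real.log (C / σ) / Real.log (r * κ)⌉ - 1) :
    (∑ j ∈ Finset.Icc 1 p, r ^ (2 * j)) + C ^ 2 * (κ ^ (2 * (p + 1)))⁻¹
      ≤ (1 + r ^ 2) *
          σ ^ (2 * Real.log κ / (Real.log r + Real.log κ) : ℝ) *
          C ^ (2 * Real.log r / (Real.log r + Real.log κ) : ℝ) :=
  stmt_16_general σ κ hσ hκ r hr C hC p hpdef
end

section
/- Let Ω ⊂ ℝ be a compact interval, K : Ω×Ω → (0,∞) a continuous symmetric kernel with ∫_Ω K(μ,x) dx = 1 for every μ ∈ Ω, and g₀ : Ω → (0,∞) a continuous probability density; set f₀(x) = ∫_Ω K(μ,x) g₀(μ) dμ and P_{g₀}(μ₁,μ₂) = ∫_Ω √(g₀(μ₁)) K(μ₁,x) f₀(x)^{-1} K(x,μ₂) √(g₀(μ₂)) dx. Suppose T_j, T_{j'} : Ω → ℝ are such that ζ_j = T_j·√g₀ and ζ_{j'} = T_{j'}·√g₀ are orthonormal in L²(Ω) and satisfy ∫_Ω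 P_{g₀}(μ₁,μ₂) ζ_j(μ₂) dμ₂ = ρ_j ζ_j(μ₁) and ∫_Ω P_{g₀}(μ₁,μ₂) ζ_{j'}(μ₂) dμ₂ = ρ_{j'} ζ_{j'}(μ₁) with ρ_j, ρ_{j'} > 0. Define U_j(x) = (∫_Ω K(x,μ) T_j(μ) g₀(μ) dμ)/f₀(x) and similarly U_{j'}. Then ∫_Ω U_j(x) U_{j'}(x) f₀(x) dx = δ_{jj'} ρ_j. -/
/-!
Write `A_i x = ∫ K x μ * T_i μ * g₀ μ dμ`, so that `U_i = A_i / f₀`. Unfolding `P_{g₀}` and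
exchanging the order of integration turns the eigen-equation of `ζ_i = T_i √g₀`, after
cancelling `√(g₀ μ) > 0`, into `∫ K μ x * A_i x / f₀ x dx = ρ_i T_i μ`. A second exchange, using
the symmetry of `K`, gives `∫ A_j A_{j'} / f₀ = ∫ T_j g₀ * ρ_{j'} T_{j'} = ρ_{j'} ⟨ζ_j, ζ_{j'}⟩`.
Fubini applies because `K`, `f₀` and `1 / f₀` are continuous on the compact interval and
`T_i g₀ = ζ_i √g₀` is integrable, `ζ_i` being square integrable.
-/

open MeasureTheory Function

section KernelIntegral

variable {α β : Type*} [MeasurableSpace α] [MeasurableSpace β] {μ : Measure α} {ν : Measure β}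

lemma ae_restrict_prod_of_forall_mem [SFinite μ] [SFinite ν] {s : Set α} {t : Set β}
    (hs : MeasurableSet s) (ht : MeasurableSet t) {p : α × β → Prop} (h : ∀ q ∈ s ×ˢ t, p q) :
    ∀ᵐ q ∂(μ.restrict s).prod (ν.restrict t), p q := by
  rw [Measure.prod_restrict]
  exact ae_restrict_of_forall_mem (hs.prod ht) h

lemma integral_integral_kernel_mul_comm [SFinite μ] [SFinite ν] {k : α → β → ℝ}
    {f : β → ℝ} {g : α → ℝ} {C : ℝ} (hk : AEStronglyMeasurable (uncurry k) (μ.prod ν))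
    (hkC : ∀ᵐ q ∂μ.prod ν, ‖uncurry k q‖ ≤ C) (hf : Integrable f ν) (hg : Integrable g μ) :
    ∫ y, (∫ x, k x y * g x ∂μ) * f y ∂ν = ∫ x, g x * ∫ y, k x y * f y ∂ν ∂μ := by
  have hint : Integrable (uncurry fun x y => k x y * (g x * f y)) (μ.prod ν) :=
    (hg.mul_prod hf).bdd_mul hk hkC
  calc ∫ y, (∫ x, k x y * g x ∂μ) * f y ∂ν
      = ∫ y, ∫ x, k x y * (g x * f y) ∂μ ∂ν := by
        refine integral_congr_ae (ae_of_all _ fun y => ?_)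
        simp only [← integral_mul_const, mul_assoc]
    _ = ∫ x, ∫ y, k x y * (g x * f y) ∂ν ∂μ := (integral_integral_swap hint).symm
    _ = ∫ x, g x * ∫ y, k x y * f y ∂ν ∂μ := by
        refine integral_congr_ae (ae_of_all _ fun x => ?_)
        simp only [← integral_const_mul]
        congr 1; ext y; ring

end KernelIntegral

section MeasureSpace

variable {α : Type*} [MeasurableSpace α] {ν : Measure α}

/-- Either `P μ₁ * ζ` is integrable for one good `μ₁`, and then `ζ = (P μ₁)⁻¹ * (P μ₁ * ζ)`,
or all the integrals are the junk value `0`, and then `ζ = 0` a.e. -/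
lemma aestronglyMeasurable_of_integral_mul_eq_mul {P : α → α → ℝ} {ζ : α → ℝ} {ρ : ℝ}
    (hρ : ρ ≠ 0) (hP : ∀ᵐ μ₁ ∂ν, AEStronglyMeasurable (P μ₁) ν ∧ ∀ᵐ μ₂ ∂ν, P μ₁ μ₂ ≠ 0)
    (heig : ∀ᵐ μ₁ ∂ν, ∫ μ₂, P μ₁ μ₂ * ζ μ₂ ∂ν = ρ * ζ μ₁) : AEStronglyMeasurable ζ ν := by
  by_cases h : ∃ μ₁, (AEStronglyMeasurable (P μ₁) ν ∧ ∀ᵐ μ₂ ∂ν, P μ₁ μ₂ ≠ 0) ∧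
      Integrable (fun μ₂ => P μ₁ μ₂ * ζ μ₂) ν
  · obtain ⟨μ₁, ⟨hPm, hP0⟩, hint⟩ := h
    refine (hPm.aemeasurable.inv.aestronglyMeasurable.mul hint.1).congr ?_
    filter_upwards [hP0] with μ₂ hμ₂
    exact inv_mul_cancel_left₀ hμ₂ _
  · push Not at h
    refine aestronglyMeasurable_const (b := (0 : ℝ)).congr ?_
    filter_upwards [hP, heig] with μ₁ hPμ₁ hμ₁
    rw [integral_undef (h μ₁ hPμ₁)] at hμ₁
    exact ((mul_eq_zero.1 hμ₁.symm).resolve_left hρ).symm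

lemma Integrable.of_integral_mul_self_ne_zero [IsFiniteMeasure ν] {ζ : α → ℝ}
    (hζ : AEStronglyMeasurable ζ ν) (h : ∫ μ, ζ μ * ζ μ ∂ν ≠ 0) : Integrable ζ ν := by
  have hsq : Integrable (fun μ => ζ μ ^ 2) ν := by
    simpa only [sq] using Integrable.of_integral_ne_zero h
  exact ((memLp_two_iff_integrable_sq hζ).2 hsq).integrable one_le_two

lemma setIntegral_pos_of_forall_pos {s : Set α} {f : α → ℝ} (hs : MeasurableSet s)
    (hs0 : ν s ≠ 0) (hf : IntegrableOn f s ν) (hpos : ∀ x ∈ s, 0 < f x) :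
    0 < ∫ x in s, f x ∂ν := by
  rw [setIntegral_pos_iff_support_of_nonneg_ae
      (ae_restrict_of_forall_mem hs fun x hx => (hpos x hx).le) hf,
    Set.inter_eq_self_of_subset_right (show s ⊆ support f from fun x hx => (hpos x hx).ne')]
  exact pos_iff_ne_zero.2 hs0

/-- The kernel `P_{g₀}`. -/
noncomputable def pKernel (ν : Measure α) (s : Set α) (K : α → α → ℝ) (g₀ f₀ : α → ℝ)
    (μ₁ μ₂ : α) : ℝ :=
  ∫ x in s, √(g₀ μ₁) * K μ₁ x * (f₀ x)⁻¹ * K x μ₂ * √(g₀ μ₂) ∂ν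

lemma pKernel_eq (s : Set α) (K : α → α → ℝ) (g₀ f₀ : α → ℝ) (μ₁ μ₂ : α) :
    pKernel ν s K g₀ f₀ μ₁ μ₂ =
      √(g₀ μ₁) * √(g₀ μ₂) * ∫ x in s, K x μ₂ * (K μ₁ x * (f₀ x)⁻¹) ∂ν := by
  rw [pKernel, ← integral_const_mul]
  congr 1; ext x; ring

end MeasureSpace

lemma ContinuousOn.aestronglyMeasurable_uncurry {X : Type*} [TopologicalSpace X]
    [SecondCountableTopology X] [MeasurableSpace X] [OpensMeasurableSpace X] {ν : Measure X}
    [SFinite ν] {s : Set X} {K : X → X → ℝ} (hK : ContinuousOn (uncurry K) (s ×ˢ s))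
    (hs : MeasurableSet s) :
    AEStronglyMeasurable (uncurry K) ((ν.restrict s).prod (ν.restrict s)) := by
  rw [Measure.prod_restrict]
  exact hK.aestronglyMeasurable (hs.prod hs)

lemma ContinuousOn.uncurry_flip {X Y Z : Type*} [TopologicalSpace X] [TopologicalSpace Y]
    [TopologicalSpace Z] {K : X → Y → Z} {s : Set X} {t : Set Y}
    (hK : ContinuousOn (uncurry K) (s ×ˢ t)) : ContinuousOn (uncurry (flip K)) (t ×ˢ s) :=
  hK.comp continuous_swap.continuousOn fun _ hq => ⟨hq.2, hq.1⟩

section Deconvolution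

variable {X : Type*} [TopologicalSpace X] [T2Space X] [MeasurableSpace X] [OpensMeasurableSpace X]
  {ν : Measure X} {s : Set X} {K : X → X → ℝ} {g₀ f₀ : X → ℝ}

lemma continuousOn_setIntegral_kernel_mul [FirstCountableTopology X] {h : X → ℝ}
    (hs : IsCompact s) (hK : ContinuousOn (uncurry K) (s ×ˢ s)) (hh : IntegrableOn h s ν) :
    ContinuousOn (fun x => ∫ y in s, K x y * h y ∂ν) s := by
  obtain ⟨C, hC⟩ := (hs.prod hs).exists_bound_of_continuousOn hK
  refine continuousOn_of_dominated (bound := fun y => C * ‖h y‖)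
    (fun x hx => ((hK.uncurry_left x hx).aestronglyMeasurable hs.measurableSet).mul hh.1)
    (fun x hx => ?_) (hh.norm.const_mul C)
    (ae_restrict_of_forall_mem hs.measurableSet fun y hy =>
      (hK.uncurry_right y hy).mul continuousOn_const)
  filter_upwards [ae_restrict_mem hs.measurableSet] with y hy
  rw [norm_mul]
  exact mul_le_mul_of_nonneg_right (hC (x, y) ⟨hx, hy⟩) (norm_nonneg _)

lemma continuousOn_pKernel [FirstCountableTopology X] [IsFiniteMeasureOnCompacts ν]
    (hs : IsCompact s) (hK : ContinuousOn (uncurry K) (s ×ˢ s)) (hg₀ : ContinuousOn g₀ s)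
    (hf₀ : ContinuousOn f₀ s) (hf₀pos : ∀ x ∈ s, 0 < f₀ x) {μ₁ : X} (hμ₁ : μ₁ ∈ s) :
    ContinuousOn (pKernel ν s K g₀ f₀ μ₁) s := by
  simp only [funext (pKernel_eq (ν := ν) s K g₀ f₀ μ₁)]
  have hG : ContinuousOn (fun x => K μ₁ x * (f₀ x)⁻¹) s :=
    (hK.uncurry_left μ₁ hμ₁).mul (hf₀.inv₀ fun x hx => (hf₀pos x hx).ne')
  exact (continuousOn_const.mul (Real.continuous_sqrt.comp_continuousOn hg₀)).mul
    (continuousOn_setIntegral_kernel_mul hs hK.uncurry_flip (hG.integrableOn_compact hs))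

lemma pKernel_pos [IsFiniteMeasureOnCompacts ν] (hs : IsCompact s) (hs0 : ν s ≠ 0)
    (hK : ContinuousOn (uncurry K) (s ×ˢ s)) (hKpos : ∀ x ∈ s, ∀ y ∈ s, 0 < K x y)
    (hg₀pos : ∀ x ∈ s, 0 < g₀ x) (hf₀ : ContinuousOn f₀ s) (hf₀pos : ∀ x ∈ s, 0 < f₀ x)
    {μ₁ μ₂ : X} (hμ₁ : μ₁ ∈ s) (hμ₂ : μ₂ ∈ s) : 0 < pKernel ν s K g₀ f₀ μ₁ μ₂ := by
  have hcont : ContinuousOn (fun x => K x μ₂ * (K μ₁ x * (f₀ x)⁻¹)) s :=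
    (hK.uncurry_right μ₂ hμ₂).mul
      ((hK.uncurry_left μ₁ hμ₁).mul (hf₀.inv₀ fun x hx => (hf₀pos x hx).ne'))
  have hint := setIntegral_pos_of_forall_pos hs.measurableSet hs0 (hcont.integrableOn_compact hs)
    fun x hx => mul_pos (hKpos x hx μ₂ hμ₂) (mul_pos (hKpos μ₁ hμ₁ x hx) (inv_pos.2 (hf₀pos x hx)))
  rw [pKernel_eq]
  exact mul_pos (mul_pos (Real.sqrt_pos.2 (hg₀pos μ₁ hμ₁)) (Real.sqrt_pos.2 (hg₀pos μ₂ hμ₂))) hint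

lemma integrableOn_mul_of_pKernel_eigen [FirstCountableTopology X]
    [IsFiniteMeasureOnCompacts ν] (hs : IsCompact s) (hs0 : ν s ≠ 0)
    (hK : ContinuousOn (uncurry K) (s ×ˢ s)) (hKpos : ∀ x ∈ s, ∀ y ∈ s, 0 < K x y)
    (hg₀ : ContinuousOn g₀ s) (hg₀pos : ∀ x ∈ s, 0 < g₀ x) (hf₀ : ContinuousOn f₀ s)
    (hf₀pos : ∀ x ∈ s, 0 < f₀ x) {T : X → ℝ} {ρ : ℝ} (hρ : ρ ≠ 0)
    (hnorm : ∫ μ in s, (T μ * √(g₀ μ)) * (T μ * √(g₀ μ)) ∂ν = 1)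
    (heig : ∀ μ₁ ∈ s, ∫ μ₂ in s, pKernel ν s K g₀ f₀ μ₁ μ₂ * (T μ₂ * √(g₀ μ₂)) ∂ν =
      ρ * (T μ₁ * √(g₀ μ₁))) :
    IntegrableOn (fun μ => T μ * g₀ μ) s ν := by
  have hsm := hs.measurableSet
  have : IsFiniteMeasure (ν.restrict s) := isFiniteMeasure_restrict.2 hs.measure_ne_top
  have hζm : AEStronglyMeasurable (fun μ => T μ * √(g₀ μ)) (ν.restrict s) :=
    aestronglyMeasurable_of_integral_mul_eq_mul hρ
      (ae_restrict_of_forall_mem hsm fun μ₁ hμ₁ =>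
        ⟨(continuousOn_pKernel hs hK hg₀ hf₀ hf₀pos hμ₁).aestronglyMeasurable hsm,
          ae_restrict_of_forall_mem hsm fun μ₂ hμ₂ =>
            (pKernel_pos hs hs0 hK hKpos hg₀pos hf₀ hf₀pos hμ₁ hμ₂).ne'⟩)
      (ae_restrict_of_forall_mem hsm heig)
  have hζ : IntegrableOn (fun μ => T μ * √(g₀ μ)) s ν :=
    Integrable.of_integral_mul_self_ne_zero hζm (by rw [hnorm]; exact one_ne_zero)
  refine (hζ.mul_continuousOn (Real.continuous_sqrt.comp_continuousOn hg₀) hs).congr_fun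
    (fun μ hμ => ?_) hsm
  change T μ * √(g₀ μ) * √(g₀ μ) = T μ * g₀ μ
  rw [mul_assoc, Real.mul_self_sqrt (hg₀pos μ hμ).le]

variable [SecondCountableTopology X] [SFinite ν] [IsFiniteMeasureOnCompacts ν]

lemma setIntegral_kernel_mul_inv_mul_eq_of_pKernel_eigen (hs : IsCompact s)
    (hK : ContinuousOn (uncurry K) (s ×ˢ s)) (hg₀pos : ∀ x ∈ s, 0 < g₀ x)
    (hf₀ : ContinuousOn f₀ s) (hf₀pos : ∀ x ∈ s, 0 < f₀ x) {T : X → ℝ} {ρ : ℝ}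
    (hTg : IntegrableOn (fun μ => T μ * g₀ μ) s ν)
    (heig : ∀ μ₁ ∈ s, ∫ μ₂ in s, pKernel ν s K g₀ f₀ μ₁ μ₂ * (T μ₂ * √(g₀ μ₂)) ∂ν =
      ρ * (T μ₁ * √(g₀ μ₁)))
    {μ₁ : X} (hμ₁ : μ₁ ∈ s) :
    ∫ x in s, K μ₁ x * (f₀ x)⁻¹ * ∫ μ in s, K x μ * (T μ * g₀ μ) ∂ν ∂ν = ρ * T μ₁ := by
  obtain ⟨C, hC⟩ := (hs.prod hs).exists_bound_of_continuousOn hK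
  have hG : IntegrableOn (fun x => K μ₁ x * (f₀ x)⁻¹) s ν :=
    ((hK.uncurry_left μ₁ hμ₁).mul (hf₀.inv₀ fun x hx => (hf₀pos x hx).ne')).integrableOn_compact hs
  have hfubini := integral_integral_kernel_mul_comm
    (hK.aestronglyMeasurable_uncurry hs.measurableSet)
    (ae_restrict_prod_of_forall_mem hs.measurableSet hs.measurableSet hC) hTg hG
  refine mul_left_cancel₀ (Real.sqrt_pos.2 (hg₀pos μ₁ hμ₁)).ne' ?_
  calc √(g₀ μ₁) * ∫ x in s, K μ₁ x * (f₀ x)⁻¹ * ∫ μ in s, K x μ * (T μ * g₀ μ) ∂ν ∂ν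
      = ∫ μ₂ in s,
          √(g₀ μ₁) * ((∫ x in s, K x μ₂ * (K μ₁ x * (f₀ x)⁻¹) ∂ν) * (T μ₂ * g₀ μ₂)) ∂ν := by
        rw [← hfubini, integral_const_mul]
    _ = ∫ μ₂ in s, pKernel ν s K g₀ f₀ μ₁ μ₂ * (T μ₂ * √(g₀ μ₂)) ∂ν := by
        refine setIntegral_congr_fun hs.measurableSet fun μ₂ hμ₂ => ?_
        set I := ∫ x in s, K x μ₂ * (K μ₁ x * (f₀ x)⁻¹) ∂ν
        rw [pKernel_eq]
        linear_combination (-(√(g₀ μ₁) * I * T μ₂)) * Real.mul_self_sqrt (hg₀pos μ₂ hμ₂).le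
    _ = √(g₀ μ₁) * (ρ * T μ₁) := by rw [heig μ₁ hμ₁]; ring

lemma setIntegral_kernel_mul_mul_inv_mul_kernel_mul (hs : IsCompact s)
    (hK : ContinuousOn (uncurry K) (s ×ˢ s)) (hKsymm : ∀ x y, K x y = K y x)
    (hg₀pos : ∀ x ∈ s, 0 < g₀ x) (hf₀ : ContinuousOn f₀ s) (hf₀pos : ∀ x ∈ s, 0 < f₀ x)
    {T T' : X → ℝ} {ρ' : ℝ} (hTg : IntegrableOn (fun μ => T μ * g₀ μ) s ν)
    (hT'g : IntegrableOn (fun μ => T' μ * g₀ μ) s ν)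
    (heig' : ∀ μ₁ ∈ s, ∫ μ₂ in s, pKernel ν s K g₀ f₀ μ₁ μ₂ * (T' μ₂ * √(g₀ μ₂)) ∂ν =
      ρ' * (T' μ₁ * √(g₀ μ₁))) :
    ∫ x in s, (∫ μ in s, K x μ * (T μ * g₀ μ) ∂ν) *
        ((f₀ x)⁻¹ * ∫ μ in s, K x μ * (T' μ * g₀ μ) ∂ν) ∂ν =
      ρ' * ∫ μ in s, (T μ * √(g₀ μ)) * (T' μ * √(g₀ μ)) ∂ν := by
  obtain ⟨C, hC⟩ := (hs.prod hs).exists_bound_of_continuousOn hK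
  have hW : IntegrableOn (fun x => (f₀ x)⁻¹ * ∫ μ in s, K x μ * (T' μ * g₀ μ) ∂ν) s ν :=
    ((hf₀.inv₀ fun x hx => (hf₀pos x hx).ne').mul
      (continuousOn_setIntegral_kernel_mul hs hK hT'g)).integrableOn_compact hs
  have hfubini := integral_integral_kernel_mul_comm
    (hK.aestronglyMeasurable_uncurry hs.measurableSet)
    (ae_restrict_prod_of_forall_mem hs.measurableSet hs.measurableSet hC) hW hTg
  calc ∫ x in s, (∫ μ in s, K x μ * (T μ * g₀ μ) ∂ν) *
        ((f₀ x)⁻¹ * ∫ μ in s, K x μ * (T' μ * g₀ μ) ∂ν) ∂ν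
      = ∫ μ in s, T μ * g₀ μ *
          ∫ x in s, K μ x * ((f₀ x)⁻¹ * ∫ μ in s, K x μ * (T' μ * g₀ μ) ∂ν) ∂ν ∂ν := by
        rw [← hfubini]
        refine setIntegral_congr_fun hs.measurableSet fun x _ => ?_
        congr 2; ext μ; rw [hKsymm]
    _ = ∫ μ in s, T μ * g₀ μ * (ρ' * T' μ) ∂ν := by
        refine setIntegral_congr_fun hs.measurableSet fun μ hμ => ?_
        rw [← setIntegral_kernel_mul_inv_mul_eq_of_pKernel_eigen hs hK hg₀pos hf₀ hf₀pos hT'g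
          heig' hμ]
        simp only [mul_assoc]
    _ = ρ' * ∫ μ in s, (T μ * √(g₀ μ)) * (T' μ * √(g₀ μ)) ∂ν := by
        rw [← integral_const_mul]
        refine setIntegral_congr_fun hs.measurableSet fun μ hμ => ?_
        linear_combination (-(ρ' * T μ * T' μ)) * Real.mul_self_sqrt (hg₀pos μ hμ).le

end Deconvolution

theorem stmt_17_general (a b : ℝ) (hab : a < b)
    (K : ℝ → ℝ → ℝ) (g₀ : ℝ → ℝ)
    (hK : ContinuousOn (fun q : ℝ × ℝ => K q.1 q.2) (Set.Icc a b ×ˢ Set.Icc a b))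
    (hKpos : ∀ μ ∈ Set.Icc a b, ∀ x ∈ Set.Icc a b, 0 < K μ x)
    (hKsymm : ∀ μ x, K μ x = K x μ)
    (hg₀ : ContinuousOn g₀ (Set.Icc a b))
    (hg₀pos : ∀ μ ∈ Set.Icc a b, 0 < g₀ μ)
    (f₀ : ℝ → ℝ)
    (hf₀ : ∀ x, f₀ x = ∫ μ in Set.Icc a b, K μ x * g₀ μ)
    (P : ℝ → ℝ → ℝ)
    (hP : ∀ μ₁ μ₂, P μ₁ μ₂ =
      ∫ x in Set.Icc a b,
        Real.sqrt (g₀ μ₁) * K μ₁ x * (f₀ x)⁻¹ * K x μ₂ * Real.sqrt (g₀ μ₂))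
    (T : ℕ → ℝ → ℝ) (ρ : ℕ → ℝ) (j j' : ℕ)
    (horth : ∀ i i' : ℕ, (i = j ∨ i = j') → (i' = j ∨ i' = j') →
      ∫ μ in Set.Icc a b,
        (T i μ * Real.sqrt (g₀ μ)) * (T i' μ * Real.sqrt (g₀ μ))
          = if i = i' then 1 else 0)
    (heig : ∀ i : ℕ, (i = j ∨ i = j') → ∀ μ₁ ∈ Set.Icc a b,
      ∫ μ₂ in Set.Icc a b, P μ₁ μ₂ * (T i μ₂ * Real.sqrt (g₀ μ₂))
        = ρ i * (T i μ₁ * Real.sqrt (g₀ μ₁)))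
    (hρpos : ∀ i : ℕ, (i = j ∨ i = j') → 0 < ρ i)
    (U : ℕ → ℝ → ℝ)
    (hU : ∀ i x, U i x = (∫ μ in Set.Icc a b, K x μ * T i μ * g₀ μ) / f₀ x) :
    ∫ x in Set.Icc a b, U j x * U j' x * f₀ x = if j = j' then ρ j else 0 := by
  obtain rfl : P = pKernel volume (Set.Icc a b) K g₀ f₀ := funext₂ hP
  set s := Set.Icc a b
  have hs : IsCompact s := isCompact_Icc
  have hs0 : volume s ≠ 0 := by
    rw [Real.volume_Icc]; exact (ENNReal.ofReal_pos.2 (sub_pos.2 hab)).ne'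
  have hf₀c : ContinuousOn f₀ s :=
    (continuousOn_setIntegral_kernel_mul hs hK.uncurry_flip (hg₀.integrableOn_compact hs)).congr
      fun x _ => hf₀ x
  have hf₀pos : ∀ x ∈ s, 0 < f₀ x := fun x hx => hf₀ x ▸
    setIntegral_pos_of_forall_pos hs.measurableSet hs0
      (((hK.uncurry_right x hx).mul hg₀).integrableOn_compact hs)
      fun μ hμ => mul_pos (hKpos μ hμ x hx) (hg₀pos μ hμ)
  have hTg : ∀ i, (i = j ∨ i = j') → IntegrableOn (fun μ => T i μ * g₀ μ) s := fun i hi =>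
    integrableOn_mul_of_pKernel_eigen hs hs0 hK hKpos hg₀ hg₀pos hf₀c hf₀pos (hρpos i hi).ne'
      (by simpa using horth i i hi hi) (heig i hi)
  calc ∫ x in s, U j x * U j' x * f₀ x
      = ∫ x in s, (∫ μ in s, K x μ * (T j μ * g₀ μ)) *
          ((f₀ x)⁻¹ * ∫ μ in s, K x μ * (T j' μ * g₀ μ)) := by
        refine setIntegral_congr_fun hs.measurableSet fun x hx => ?_
        simp only [hU, mul_assoc]
        field_simp [(hf₀pos x hx).ne']
    _ = ρ j' * ∫ μ in s, (T j μ * √(g₀ μ)) * (T j' μ * √(g₀ μ)) :=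
        setIntegral_kernel_mul_mul_inv_mul_kernel_mul hs hK hKsymm hg₀pos hf₀c hf₀pos
          (hTg j (.inl rfl)) (hTg j' (.inr rfl)) (heig j' (.inr rfl))
    _ = if j = j' then ρ j else 0 := by
        rw [horth j j' (.inl rfl) (.inr rfl)]
        split_ifs with h <;> simp [h]

/-- The covariance computation in the proof of Lemma 6: if `ζ_j = T_j √g₀` and
`ζ_{j'} = T_{j'} √g₀` are orthonormal eigenfunctions of the deconvolution operator
`P_{g₀}` with positive eigenvalues `ρ_j, ρ_{j'}`, and
`U_j(x) = (∫ K(x,μ) T_j(μ) g₀(μ) dμ)/f₀(x)`, then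
`∫ U_j(x) U_{j'}(x) f₀(x) dx = δ_{jj'} ρ_j`. -/
theorem stmt_17 (a b : ℝ) (hab : a < b)
    (K : ℝ → ℝ → ℝ) (g₀ : ℝ → ℝ)
    (hK : ContinuousOn (fun q : ℝ × ℝ => K q.1 q.2) (Set.Icc a b ×ˢ Set.Icc a b))
    (hKpos : ∀ μ ∈ Set.Icc a b, ∀ x ∈ Set.Icc a b, 0 < K μ x)
    (hKsymm : ∀ μ x, K μ x = K x μ)
    (hKint : ∀ μ ∈ Set.Icc a b, ∫ x in Set.Icc a b, K μ x = 1)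
    (hg₀ : ContinuousOn g₀ (Set.Icc a b))
    (hg₀pos : ∀ μ ∈ Set.Icc a b, 0 < g₀ μ)
    (hg₀int : ∫ μ in Set.Icc a b, g₀ μ = 1)
    (f₀ : ℝ → ℝ)
    (hf₀ : ∀ x, f₀ x = ∫ μ in Set.Icc a b, K μ x * g₀ μ)
    (P : ℝ → ℝ → ℝ)
    (hP : ∀ μ₁ μ₂, P μ₁ μ₂ =
      ∫ x in Set.Icc a b,
        Real.sqrt (g₀ μ₁) * K μ₁ x * (f₀ x)⁻¹ * K x μ₂ * Real.sqrt (g₀ μ₂))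
    (T : ℕ → ℝ → ℝ) (ρ : ℕ → ℝ) (j j' : ℕ)
    (horth : ∀ i i' : ℕ, (i = j ∨ i = j') → (i' = j ∨ i' = j') →
      ∫ μ in Set.Icc a b,
        (T i μ * Real.sqrt (g₀ μ)) * (T i' μ * Real.sqrt (g₀ μ))
          = if i = i' then 1 else 0)
    (heig : ∀ i : ℕ, (i = j ∨ i = j') → ∀ μ₁ ∈ Set.Icc a b,
      ∫ μ₂ in Set.Icc a b, P μ₁ μ₂ * (T i μ₂ * Real.sqrt (g₀ μ₂))
        = ρ i * (T i μ₁ * Real.sqrt (g₀ μ₁)))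
    (hρpos : ∀ i : ℕ, (i = j ∨ i = j') → 0 < ρ i)
    (U : ℕ → ℝ → ℝ)
    (hU : ∀ i x, U i x = (∫ μ in Set.Icc a b, K x μ * T i μ * g₀ μ) / f₀ x) :
    ∫ x in Set.Icc a b, U j x * U j' x * f₀ x = if j = j' then ρ j else 0 :=
  stmt_17_general a b hab K g₀ hK hKpos hKsymm hg₀ hg₀pos f₀ hf₀ P hP T ρ j j' horth heig hρpos U hU
end
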